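/- arXiv:2505.02336 — 9 statements merged into one kernel-verified Lean document; each statement's English description precedes it below -/
import Mathlib

section
/- Let (y_n)_{n≥0} be a sequence of points in [0,1) and (r_n)_{n≥0} a sequence of positive reals with r_n → 0 as n → ∞, and let B_n = {x ∈ ℝ : |x − y_n| < r_n}. Then the set K({B_n}) = {x ∈ [0,1) : T_b^n(x) ∉ B_n for all but finitely many n ≥ 0} has Hausdorff dimension 1. -/
/-!
Fix a block length `l` and expand points of `[0,1)` in base `B = b^l`. Once `2 r_n ≤ b^{-2l}`,
the condition `T_b^n x ∈ B_n` forces the base-`B` digit of `x` with index `⌊n/l⌋ + 1` to be one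
of two values determined by `y_n` and `r_n`. Each index is reached by `l` values of `n`, so
forbidding these `2l` values at every index, together with the digit `B - 1` (which keeps distinct
expansions apart), still leaves at least `b^{l-1}` digits when `b ≥ 3`. The resulting Cantor set
lies in `K({B_n})`, and recoding its digits into base `b^{l-1}` maps it onto `[0,1)` by a map that
is Hölder of exponent `(l-1)/l`, because `B^{(l-1)/l} = b^{l-1}`. Hence
`dim_H K({B_n}) ≥ (l-1)/l` for every `l`.
-/

open MeasureTheory Filter

namespace Paper

/-- The expanding map `T_b : [0,1) → [0,1)`, `x ↦ bx (mod 1)`. -/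
noncomputable def Tmap (b : ℕ) : ℝ → ℝ := fun x => Int.fract ((b : ℝ) * x)

open scoped NNReal ENNReal
open Real (ofDigits ofDigitsTerm digits)

theorem holderOnWith_of_dist_le {X Y : Type*} [PseudoMetricSpace X] [PseudoMetricSpace Y]
    {C r : ℝ≥0} {f : X → Y} {s : Set X}
    (h : ∀ x ∈ s, ∀ y ∈ s, dist (f x) (f y) ≤ C * dist x y ^ (r : ℝ)) :
    HolderOnWith C r f s := by
  intro x hx y hy
  rw [edist_dist, edist_dist, ENNReal.ofReal_rpow_of_nonneg dist_nonneg r.coe_nonneg,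
    ← ENNReal.ofReal_coe_nnreal, ← ENNReal.ofReal_mul C.coe_nonneg]
  exact ENNReal.ofReal_le_ofReal (h x hx y hy)

section Digits

variable {B : ℕ}

theorem ofDigits_le_of_forall_le (hB : 1 < B) {c : ℕ → Fin B} {d : ℕ}
    (hc : ∀ j, (c j : ℕ) ≤ d) : ofDigits c ≤ d / (B - 1) := by
  have hB1 : (0 : ℝ) < B - 1 := sub_pos.2 (by exact_mod_cast hB)
  have hlast : ((B - 1 : ℕ) : ℝ) = B - 1 := by rw [Nat.cast_sub hB.le, Nat.cast_one]
  calc ofDigits c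
      ≤ ∑' i, d / (B - 1) * ofDigitsTerm (fun _ ↦ (⟨B - 1, by omega⟩ : Fin B)) i := by
        refine Real.summable_ofDigitsTerm.tsum_le_tsum (fun i ↦ ?_)
          (Real.summable_ofDigitsTerm.mul_left _)
        simp only [ofDigitsTerm, hlast]
        rw [← mul_assoc, div_mul_cancel₀ _ hB1.ne']
        gcongr
        exact_mod_cast hc i
    _ = d / (B - 1) := by
      rw [tsum_mul_left, ← Real.ofDigits, Real.ofDigits_const_last_eq_one' hB, mul_one]

theorem ofDigits_le_one_sub_inv {c : ℕ → Fin B} (hc : ∀ j, (c j : ℕ) + 2 ≤ B) :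
    ofDigits c ≤ 1 - ((B : ℝ) - 1)⁻¹ := by
  have hB : 1 < B := by linarith [hc 0]
  have h := ofDigits_le_of_forall_le hB (d := B - 2) (fun j ↦ Nat.le_sub_of_add_le (hc j))
  have hB1 : (0 : ℝ) < B - 1 := sub_pos.2 (by exact_mod_cast hB)
  rw [Nat.cast_sub (by omega), Nat.cast_ofNat] at h
  convert h using 1
  field_simp
  ring

theorem ofDigits_lt_one {c : ℕ → Fin B} (hc : ∀ j, (c j : ℕ) + 2 ≤ B) : ofDigits c < 1 :=
  (ofDigits_le_one_sub_inv hc).trans_lt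
    (sub_lt_self _ (inv_pos.2 (sub_pos.2 (by exact_mod_cast (by linarith [hc 0] : 1 < B)))))

theorem exists_pow_mul_sum_ofDigitsTerm_eq_natCast (c : ℕ → Fin B) (n : ℕ) :
    ∃ m : ℕ, (B : ℝ) ^ n * ∑ i ∈ Finset.range n, ofDigitsTerm c i = m := by
  have hB : (B : ℝ) ≠ 0 := by exact_mod_cast (c 0).pos.ne'
  induction n with
  | zero => exact ⟨0, by simp⟩
  | succ n ih =>
    obtain ⟨m, hm⟩ := ih
    refine ⟨B * m + c n, ?_⟩
    rw [Finset.sum_range_succ, mul_add, pow_succ, mul_comm _ (B : ℝ), mul_assoc, hm]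
    simp only [ofDigitsTerm]
    push_cast
    field_simp
    ring

theorem ofDigits_eq_sum_add_ofDigitsTerm_add (c : ℕ → Fin B) (n : ℕ) :
    ofDigits c = ∑ i ∈ Finset.range n, ofDigitsTerm c i
      + ((B : ℝ) ^ (n + 1))⁻¹ * (c n + ofDigits (fun i ↦ c (i + (n + 1)))) := by
  rw [Real.ofDigits_eq_sum_add_ofDigits c (n + 1), Finset.sum_range_succ, ofDigitsTerm]
  ring

theorem digits_ofDigits [NeZero B] {c : ℕ → Fin B} (hc : ∀ j, (c j : ℕ) + 2 ≤ B) :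
    digits (ofDigits c) B = c := by
  funext n
  obtain ⟨m, hm⟩ := exists_pow_mul_sum_ofDigitsTerm_eq_natCast c n
  set t := ofDigits (fun i ↦ c (i + (n + 1)))
  have ht0 : 0 ≤ t := Real.ofDigits_nonneg _
  have ht1 : t < 1 := ofDigits_lt_one fun i ↦ hc _
  have hB : (B : ℝ) ≠ 0 := NeZero.ne _
  have hx : ofDigits c * B ^ (n + 1) = t + (B * m + c n : ℕ) := by
    rw [ofDigits_eq_sum_add_ofDigitsTerm_add c n]
    push_cast
    field_simp
    linear_combination (B : ℝ) * hm
  ext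
  rw [digits, hx, Nat.floor_add_natCast ht0, Nat.floor_eq_zero.2 ht1, zero_add, Fin.val_ofNat,
    Nat.mul_add_mod, Nat.mod_eq_of_lt (c n).isLt]

theorem le_abs_ofDigits_sub_ofDigits {c c' : ℕ → Fin B} (hc : ∀ j, (c j : ℕ) + 2 ≤ B)
    (hc' : ∀ j, (c' j : ℕ) + 2 ≤ B) {n : ℕ} (heq : ∀ i < n, c i = c' i) (hne : c n ≠ c' n) :
    ((B : ℝ) ^ (n + 1))⁻¹ * ((B : ℝ) - 1)⁻¹ ≤ |ofDigits c - ofDigits c'| := by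
  wlog hlt : c n < c' n generalizing c c'
  · rw [abs_sub_comm]
    exact this hc' hc (fun i hi ↦ (heq i hi).symm) hne.symm
      (lt_of_le_of_ne (not_lt.1 hlt) hne.symm)
  have hsum :
      ∑ i ∈ Finset.range n, ofDigitsTerm c i = ∑ i ∈ Finset.range n, ofDigitsTerm c' i :=
    Finset.sum_congr rfl fun i hi ↦ by simp only [ofDigitsTerm, heq i (Finset.mem_range.1 hi)]
  have hdigit : (c n : ℝ) + 1 ≤ c' n := by exact_mod_cast hlt
  have htail := ofDigits_le_one_sub_inv fun i ↦ hc (i + (n + 1))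
  have htail' := Real.ofDigits_nonneg fun i ↦ c' (i + (n + 1))
  have hdiff : ofDigits c' - ofDigits c = ((B : ℝ) ^ (n + 1))⁻¹ *
      ((c' n + ofDigits fun i ↦ c' (i + (n + 1))) - (c n + ofDigits fun i ↦ c (i + (n + 1)))) := by
    rw [ofDigits_eq_sum_add_ofDigitsTerm_add c n, ofDigits_eq_sum_add_ofDigitsTerm_add c' n,
      hsum]
    ring
  rw [abs_sub_comm, hdiff]
  refine le_abs.2 (Or.inl ?_)
  gcongr
  linarith

theorem abs_ofDigits_sub_le_rpow {M : ℕ} {c c' : ℕ → Fin B} (hc : ∀ j, (c j : ℕ) + 2 ≤ B)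
    (hc' : ∀ j, (c' j : ℕ) + 2 ≤ B) {d d' : ℕ → Fin M} (hd : ∀ i, c i = c' i → d i = d' i)
    {s : ℝ≥0} (hs : (B : ℝ) ^ (s : ℝ) ≤ M) :
    |ofDigits d - ofDigits d'| ≤ M ^ 2 * |ofDigits c - ofDigits c'| ^ (s : ℝ) := by
  by_cases hcc : c = c'
  · obtain rfl : d = d' := funext fun i ↦ hd i (congrFun hcc i)
    simp only [sub_self, abs_zero]
    positivity
  obtain ⟨i, hi⟩ := Function.ne_iff.1 hcc
  have hex : ∃ i, c i ≠ c' i := ⟨i, hi⟩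
  set n := Nat.find hex
  have heq : ∀ i < n, c i = c' i := fun i hi ↦ not_not.1 (Nat.find_min hex hi)
  have hB : (1 : ℝ) < B := by exact_mod_cast (by linarith [hc 0] : 1 < B)
  have hM : (0 : ℝ) < M := by exact_mod_cast (d 0).pos
  have hsep : ((B : ℝ) ^ (n + 2))⁻¹ ≤ |ofDigits c - ofDigits c'| := by
    refine le_trans ?_ (le_abs_ofDigits_sub_ofDigits hc hc' heq (Nat.find_spec hex))
    rw [pow_succ, mul_inv]
    gcongr
    linarith
  calc |ofDigits d - ofDigits d'|
      ≤ ((M : ℝ) ^ n)⁻¹ := Real.abs_ofDigits_sub_ofDigits_le fun i hi ↦ hd i (heq i hi)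
    _ = M ^ 2 * ((M : ℝ) ^ (n + 2))⁻¹ := by field_simp; ring
    _ ≤ M ^ 2 * (((B : ℝ) ^ (s : ℝ)) ^ (n + 2))⁻¹ := by gcongr
    _ = M ^ 2 * ((B : ℝ) ^ (n + 2))⁻¹ ^ (s : ℝ) := by
      rw [Real.inv_rpow (by positivity), Real.rpow_pow_comm (by positivity)]
    _ ≤ M ^ 2 * |ofDigits c - ofDigits c'| ^ (s : ℝ) := by gcongr

theorem exists_injective_fin_mem {A : Finset ℕ} {M : ℕ} (hA : ∀ a ∈ A, a < B)
    (hM : M ≤ A.card) : ∃ g : Fin M → Fin B, Function.Injective g ∧ ∀ i, (g i : ℕ) ∈ A :=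
  ⟨fun i ↦ ⟨A.orderEmbOfFin rfl (Fin.castLE hM i), hA _ (A.orderEmbOfFin_mem rfl _)⟩,
    fun _ _ h ↦ Fin.castLE_injective _ ((A.orderEmbOfFin rfl).injective (Fin.mk.inj h)),
    fun _ ↦ A.orderEmbOfFin_mem rfl _⟩

theorem le_dimH_image_ofDigits {M : ℕ} (hM : 1 < M) (A : ℕ → Finset ℕ)
    (hA : ∀ j, ∀ a ∈ A j, a + 2 ≤ B) (hcard : ∀ j, M ≤ (A j).card)
    {s : ℝ≥0} (hs : (B : ℝ) ^ (s : ℝ) ≤ M) :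
    (s : ℝ≥0∞) ≤ dimH (ofDigits '' {c : ℕ → Fin B | ∀ j, (c j : ℕ) ∈ A j}) := by
  rcases eq_zero_or_pos s with rfl | hs0
  · simp
  obtain ⟨a, ha⟩ : (A 0).Nonempty := Finset.card_pos.1 (by have := hcard 0; omega)
  have : NeZero B := ⟨by linarith [hA 0 a ha]⟩
  have : NeZero M := ⟨by omega⟩
  choose g hg_inj hg_mem using fun j ↦
    exists_injective_fin_mem (B := B) (fun a ha ↦ by have := hA j a ha; omega) (hcard j)
  set S := {c : ℕ → Fin B | ∀ j, (c j : ℕ) ∈ A j}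
  have hS : ∀ c ∈ S, ∀ j, (c j : ℕ) + 2 ≤ B := fun c hc j ↦ hA j _ (hc j)
  -- `F` recodes the base-`B` digits of a point of the Cantor set into base-`M` digits.
  set F : ℝ → ℝ := fun x ↦ ofDigits fun j ↦ Function.invFun (g j) (digits x B j)
  have hF : ∀ c ∈ S, F (ofDigits c) = ofDigits fun j ↦ Function.invFun (g j) (c j) := by
    intro c hc
    simp only [F, digits_ofDigits (hS c hc)]
  have hsurj : Set.Ico 0 1 ⊆ F '' (ofDigits '' S) := by
    intro t ht
    refine ⟨ofDigits fun j ↦ g j (digits t M j), ⟨_, fun j ↦ hg_mem j _, rfl⟩, ?_⟩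
    rw [hF _ fun j ↦ hg_mem j _]
    simp only [Function.leftInverse_invFun (hg_inj _) _]
    exact Real.ofDigits_digits hM ht
  have hholder : HolderOnWith ((M : ℝ≥0) ^ 2) s F (ofDigits '' S) := by
    refine holderOnWith_of_dist_le ?_
    rintro _ ⟨c, hc, rfl⟩ _ ⟨c', hc', rfl⟩
    rw [Real.dist_eq, Real.dist_eq, hF c hc, hF c' hc']
    push_cast
    exact abs_ofDigits_sub_le_rpow (hS c hc) (hS c' hc') (fun i h ↦ by rw [h]) hs
  have hIco : dimH (Set.Ico (0 : ℝ) 1) = 1 := by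
    rw [Real.dimH_of_nonempty_interior] <;> simp
  have h := (hIco.symm.le.trans (dimH_mono hsurj)).trans (hholder.dimH_image_le hs0)
  rwa [ENNReal.le_div_iff_mul_le (by simp [hs0.ne']) (by simp), one_mul] at h

end Digits

section Floor

variable {R : Type*} [Field R] [LinearOrder R] [IsStrictOrderedRing R] [FloorRing R]

theorem floor_eq_or_eq_add_one_of_le_of_le {a x : R} (h₁ : a ≤ x) (h₂ : x ≤ a + 1) :
    ⌊x⌋₊ = ⌊a⌋₊ ∨ ⌊x⌋₊ = ⌊a⌋₊ + 1 := by
  have hlt : ⌊x⌋₊ < ⌊a⌋₊ + 2 := by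
    rcases le_or_gt x 0 with hx | hx
    · rw [Nat.floor_of_nonpos hx]
      omega
    · exact (Nat.floor_lt hx.le).2 (by push_cast; linarith [Nat.lt_floor_add_one a])
  have := Nat.floor_le_floor h₁
  omega

theorem floor_natCast_mul_fract (q : ℕ) {u : R} (hu : 0 ≤ u) :
    ⌊q * Int.fract u⌋₊ = ⌊q * u⌋₊ % q := by
  rcases Nat.eq_zero_or_pos q with rfl | hq
  · simp
  have hsplit : (q : R) * u = q * Int.fract u + (q * ⌊u⌋₊ : ℕ) := by
    rw [Int.fract, ← Int.natCast_floor_eq_floor hu]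
    push_cast
    ring
  have hlt : ⌊q * Int.fract u⌋₊ < q :=
    (Nat.floor_lt (by have := Int.fract_nonneg u; positivity)).2
      (mul_lt_of_lt_one_right (by exact_mod_cast hq) (Int.fract_lt_one u))
  rw [hsplit, Nat.floor_add_natCast (by have := Int.fract_nonneg u; positivity), add_comm,
    Nat.mul_add_mod, Nat.mod_eq_of_lt hlt]

end Floor

theorem iterate_Tmap_eq_fract (b : ℕ) {x : ℝ} (hx : x ∈ Set.Ico (0 : ℝ) 1) (n : ℕ) :
    (Tmap b)^[n] x = Int.fract ((b : ℝ) ^ n * x) := by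
  induction n with
  | zero => simp [Int.fract_eq_self.mpr hx]
  | succ n ih =>
    rw [Function.iterate_succ_apply', ih, Tmap]
    have h : (b : ℝ) * Int.fract ((b : ℝ) ^ n * x)
        = (b : ℝ) ^ (n + 1) * x - ((b * ⌊(b : ℝ) ^ n * x⌋ : ℤ) : ℝ) := by
      rw [Int.fract]
      push_cast
      ring
    rw [h, Int.fract_sub_intCast]

theorem pow_pred_add_le_pow {b l : ℕ} (hb : 3 ≤ b) (hl : 2 ≤ l) :
    b ^ (l - 1) + 2 * l + 1 ≤ b ^ l := by
  obtain ⟨k, rfl⟩ : ∃ k, l = k + 1 := ⟨l - 1, by omega⟩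
  have h3 : 1 + k * 2 ≤ 3 ^ k := by
    exact_mod_cast one_add_mul_le_pow (R := ℤ) (a := 2) (by norm_num) k
  have hbk : 3 ^ k ≤ b ^ k := Nat.pow_le_pow_left hb k
  have : b ^ k * 3 ≤ b ^ (k + 1) := by rw [pow_succ]; exact Nat.mul_le_mul_left _ hb
  simp only [Nat.add_sub_cancel]
  omega

section Avoidance

variable (b l : ℕ) (y r : ℕ → ℝ)

/- If `n` lies in the `j`-th block `[(j - 1) l, j l)`, `T_b^n x ∈ B(y_n, r_n)` and
`2 r_n ≤ b^{-2l}`, then the base-`b^l` digit of `x` with index `j` is one of these two values. -/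
noncomputable def badDigits (j : ℕ) : Finset ℕ :=
  (Finset.Ico (j * l - l) (j * l)).biUnion fun n ↦
    {⌊(b : ℝ) ^ (2 * l - n % l) * (y n - r n)⌋₊ % b ^ l,
      (⌊(b : ℝ) ^ (2 * l - n % l) * (y n - r n)⌋₊ + 1) % b ^ l}

noncomputable def allowedDigits (j : ℕ) : Finset ℕ :=
  Finset.range (b ^ l - 1) \ badDigits b l y r j

variable {b l y r}

theorem card_badDigits_le (j : ℕ) : (badDigits b l y r j).card ≤ 2 * l := by
  refine (Finset.card_biUnion_le_card_mul _ _ 2 fun _ _ ↦ Finset.card_le_two).trans ?_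
  rw [Nat.card_Ico]
  omega

theorem pow_pred_le_card_allowedDigits (hb : 3 ≤ b) (hl : 2 ≤ l) (j : ℕ) :
    b ^ (l - 1) ≤ (allowedDigits b l y r j).card := by
  have h := Finset.le_card_sdiff (badDigits b l y r j) (Finset.range (b ^ l - 1))
  rw [Finset.card_range] at h
  have := card_badDigits_le (b := b) (l := l) (y := y) (r := r) j
  have := pow_pred_add_le_pow hb hl
  rw [allowedDigits]
  omega

theorem add_two_le_of_mem_allowedDigits {j a : ℕ} (ha : a ∈ allowedDigits b l y r j) :
    a + 2 ≤ b ^ l := by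
  have := Finset.mem_range.1 (Finset.mem_sdiff.1 ha).1
  omega

/- Digit `j` of `ofDigits c` has weight `B^{-(j+1)}`, so it is `⌊B^{j+1} x⌋ mod B`; for
`j = n / l + 1` and `B = b^l` the exponent splits as `l (j + 1) = (2l - n % l) + n`. -/
theorem digit_eq_floor_mul_iterate_Tmap_mod (hl : 0 < l) {c : ℕ → Fin (b ^ l)}
    (hc : ∀ j, (c j : ℕ) + 2 ≤ b ^ l) (n : ℕ) :
    (c (n / l + 1) : ℕ) = ⌊(b : ℝ) ^ (2 * l - n % l) * (Tmap b)^[n] (ofDigits c)⌋₊ % b ^ l := by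
  have : NeZero (b ^ l) := ⟨(c 0).pos.ne'⟩
  have hx : ofDigits c ∈ Set.Ico (0 : ℝ) 1 := ⟨Real.ofDigits_nonneg c, ofDigits_lt_one hc⟩
  have hmod := Nat.mod_lt n hl
  have hdiv := Nat.div_add_mod n l
  have hexp : l * (n / l + 1 + 1) = (2 * l - n % l) + n := by
    have : l * (n / l + 1 + 1) = l * (n / l) + 2 * l := by ring
    omega
  rw [iterate_Tmap_eq_fract b hx, ← Nat.cast_pow,
    floor_natCast_mul_fract _ (mul_nonneg (by positivity) hx.1),
    Nat.mod_mod_of_dvd _ (pow_dvd_pow b (by omega : l ≤ 2 * l - n % l))]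
  conv_lhs => rw [← digits_ofDigits hc]
  rw [Real.digits, Fin.val_ofNat]
  congr 2
  push_cast
  rw [← pow_mul, hexp, pow_add]
  ring

theorem iterate_Tmap_ofDigits_notMem_ball (hl : 0 < l) {c : ℕ → Fin (b ^ l)}
    (hc : ∀ j, (c j : ℕ) ∈ allowedDigits b l y r j) {n : ℕ}
    (hrn : r n ≤ ((b : ℝ) ^ (2 * l))⁻¹ / 2) :
    (Tmap b)^[n] (ofDigits c) ∉ Metric.ball (y n) (r n) := by
  have hcB : ∀ j, (c j : ℕ) + 2 ≤ b ^ l := fun j ↦ add_two_le_of_mem_allowedDigits (hc j)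
  set z := (Tmap b)^[n] (ofDigits c)
  set e := 2 * l - n % l
  intro hball
  rw [Metric.mem_ball, Real.dist_eq, abs_lt] at hball
  have hb : 1 ≤ b := Nat.one_le_iff_ne_zero.2 fun h ↦ by simpa [h, hl.ne'] using hcB 0
  have hbe : (b : ℝ) ^ e ≤ (b : ℝ) ^ (2 * l) := pow_le_pow_right₀ (by exact_mod_cast hb) (by omega)
  have hwidth : (b : ℝ) ^ e * z ≤ (b : ℝ) ^ e * (y n - r n) + 1 := by
    have : (b : ℝ) ^ e * (2 * r n) ≤ 1 := by
      calc (b : ℝ) ^ e * (2 * r n) ≤ (b : ℝ) ^ (2 * l) * (2 * r n) := by gcongr; linarith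
        _ ≤ (b : ℝ) ^ (2 * l) * ((b : ℝ) ^ (2 * l))⁻¹ := by gcongr; linarith
        _ ≤ 1 := mul_inv_le_one
    nlinarith
  have hbad : (c (n / l + 1) : ℕ) ∈ badDigits b l y r (n / l + 1) := by
    have hdiv := Nat.div_add_mod n l
    have hmod := Nat.mod_lt n hl
    have hjl : (n / l + 1) * l = l * (n / l) + l := by ring
    refine Finset.mem_biUnion.2 ⟨n, Finset.mem_Ico.2 ⟨by omega, by omega⟩, ?_⟩
    rw [digit_eq_floor_mul_iterate_Tmap_mod hl hcB n]
    rcases floor_eq_or_eq_add_one_of_le_of_le (by gcongr; linarith) hwidth with h | h <;>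
      simp [h, z, e]
  exact (Finset.mem_sdiff.1 (hc _)).2 hbad

theorem le_dimH_liminf_set (hb : 3 ≤ b) (hr0 : Tendsto r atTop (nhds 0)) {m : ℕ} (hm : 1 ≤ m) :
    (((m : ℝ≥0) / (m + 1) : ℝ≥0) : ℝ≥0∞) ≤ dimH {x : ℝ | x ∈ Set.Ico (0 : ℝ) 1 ∧
      ∀ᶠ n in atTop, (Tmap b)^[n] x ∉ Metric.ball (y n) (r n)} := by
  obtain ⟨N, hN⟩ := eventually_atTop.1 <|
    hr0.eventually (ge_mem_nhds (by positivity : (0 : ℝ) < ((b : ℝ) ^ (2 * (m + 1)))⁻¹ / 2))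
  have hexp : ((b ^ (m + 1) : ℕ) : ℝ) ^ (((m : ℝ≥0) / (m + 1) : ℝ≥0) : ℝ) = (b ^ m : ℕ) := by
    have hm1 : ((m + 1 : ℕ) : ℝ) ≠ 0 := by positivity
    push_cast
    rw [← Nat.cast_succ, ← Real.rpow_natCast_mul (by positivity), mul_div_cancel₀ _ hm1,
      Real.rpow_natCast]
  refine (le_dimH_image_ofDigits (B := b ^ (m + 1)) (M := b ^ m)
    (Nat.one_lt_pow (by omega) (by omega)) _
    (fun j a ha ↦ add_two_le_of_mem_allowedDigits ha)
    (fun j ↦ by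
      simpa using pow_pred_le_card_allowedDigits (l := m + 1) (y := y) (r := r) hb (by omega) j)
    hexp.le).trans (dimH_mono ?_)
  rintro _ ⟨c, hc, rfl⟩
  exact ⟨⟨Real.ofDigits_nonneg c, ofDigits_lt_one fun j ↦ add_two_le_of_mem_allowedDigits (hc j)⟩,
    eventually_atTop.2 ⟨N, fun n hn ↦ iterate_Tmap_ofDigits_notMem_ball (by omega) hc (hN n hn)⟩⟩

end Avoidance

theorem dimH_liminf_set_eq_one_general (b : ℕ) (hb : 3 ≤ b)
    (y : ℕ → ℝ)
    (r : ℕ → ℝ)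
    (hr0 : Filter.Tendsto r Filter.atTop (nhds 0)) :
    dimH { x : ℝ | x ∈ Set.Ico (0 : ℝ) 1 ∧
        ∀ᶠ n in Filter.atTop, (Tmap b)^[n] x ∉ Metric.ball (y n) (r n) } = 1 := by
  refine le_antisymm ((dimH_mono (Set.subset_univ _)).trans Real.dimH_univ.le) ?_
  have hlim : Tendsto (fun m : ℕ ↦ (((m : ℝ≥0) / (m + 1) : ℝ≥0) : ℝ≥0∞)) atTop (nhds 1) := by
    simpa using ENNReal.tendsto_coe.2 (tendsto_natCast_div_add_atTop (1 : ℝ≥0))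
  exact le_of_tendsto hlim (eventually_atTop.2 ⟨1, fun m hm ↦ le_dimH_liminf_set hb hr0 hm⟩)

/-- **Theorem 1.4 (i).** If `diam B_n = 2 r_n → 0`, then the liminf set
`K({B_n}) = {x ∈ [0,1) : T_b^n x ∉ B_n for all but finitely many n}` has full
Hausdorff dimension. -/
theorem dimH_liminf_set_eq_one (b : ℕ) (hb : 3 ≤ b)
    (y : ℕ → ℝ) (hy : ∀ n, y n ∈ Set.Ico (0 : ℝ) 1)
    (r : ℕ → ℝ) (hr : ∀ n, 0 < r n)
    (hr0 : Filter.Tendsto r Filter.atTop (nhds 0)) :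
    dimH { x : ℝ | x ∈ Set.Ico (0 : ℝ) 1 ∧
        ∀ᶠ n in Filter.atTop, (Tmap b)^[n] x ∉ Metric.ball (y n) (r n) } = 1 :=
  dimH_liminf_set_eq_one_general b hb y r hr0

end Paper
end

section
/- Let (y_n)_{n≥0} be a sequence of points in [0,1) and (r_n)_{n≥0} a sequence of positive reals, and let B_n = {x ∈ ℝ : |x − y_n| < r_n}. If the set K({B_n}) = {x ∈ [0,1) : T_b^n(x) ∉ B_n for all but finitely many n ≥ 0} has Hausdorff dimension 1, then liminf_{n→∞} r_n = 0. -/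
/-!
If `liminf r_n > 0`, then `r_n > ε` eventually; fix `M = b^k` with `1/M < ε`. Two points of
`[0,1)` with the same first base-`M` digit are closer than `1/M`, so once `r_n > ε` a point whose
`T_b`-orbit avoids `B_n` has `T_b^n x` with first base-`M` digit different from that of `y_n`. Hence
a point of `K` whose orbit avoids the balls from time `N` on is, after its first `N` base-`b`
digits, a point whose successive base-`M` digits each avoid one prescribed value. Such a set is
covered at level `m` by `(M-1)^m` intervals of length `M^{-m}`, so its dimension is at most
`log_M (M-1) < 1`, and `K` is a countable union of similar copies of such sets.
-/

open MeasureTheory Filter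
open scoped Topology

namespace Paper

section Floor

variable {R : Type*} [Ring R] [LinearOrder R] [IsStrictOrderedRing R] [FloorRing R]

theorem fract_natCast_mul_fract (n : ℕ) (a : R) :
    Int.fract ((n : R) * Int.fract a) = Int.fract ((n : R) * a) := by
  have : (n : R) * Int.fract a = n * a - ((n * ⌊a⌋ : ℤ) : R) := by
    rw [Int.fract]
    push_cast
    rw [mul_sub]
  rw [this, Int.fract_sub_intCast]

theorem natFloor_natCast_mul {a : R} (ha : 0 ≤ a) (n : ℕ) :
    ⌊(n : R) * a⌋₊ = n * ⌊a⌋₊ + ⌊(n : R) * Int.fract a⌋₊ := by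
  have : (n : R) * a = n * Int.fract a + ((n * ⌊a⌋₊ : ℕ) : R) := by
    conv_lhs => rw [← Int.floor_add_fract a, ← natCast_floor_eq_intCast_floor ha]
    push_cast
    rw [mul_add, add_comm]
  rw [this, Nat.floor_add_natCast (mul_nonneg n.cast_nonneg (Int.fract_nonneg a)), add_comm]

theorem natFloor_natCast_mul_lt {a : R} (ha : a < 1) {n : ℕ} (hn : 0 < n) :
    ⌊(n : R) * a⌋₊ < n := by
  rw [Nat.floor_lt' hn.ne']
  exact mul_lt_of_lt_one_right (by exact_mod_cast hn) ha

theorem dist_lt_inv_of_natFloor_mul_eq {c w y : ℝ} (hc : 0 < c) (hw : 0 ≤ w) (hy : 0 ≤ y)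
    (h : ⌊c * w⌋₊ = ⌊c * y⌋₊) : dist w y < c⁻¹ := by
  have hint : ⌊c * w⌋ = ⌊c * y⌋ := by
    rw [← Int.natCast_floor_eq_floor (by positivity), ← Int.natCast_floor_eq_floor (by positivity),
      h]
  have := Int.abs_sub_lt_one_of_floor_eq_floor hint
  rw [← mul_sub, abs_mul, abs_of_pos hc] at this
  rw [Real.dist_eq, ← one_div, lt_div_iff₀ hc, mul_comm]
  exact this

end Floor

theorem Tmap_comp_Tmap (b c : ℕ) : Tmap b ∘ Tmap c = Tmap (b * c) := by
  funext x
  simp only [Function.comp_apply, Tmap, fract_natCast_mul_fract, Nat.cast_mul, mul_assoc]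

theorem Tmap_iterate (b : ℕ) {k : ℕ} (hk : k ≠ 0) : (Tmap b)^[k] = Tmap (b ^ k) := by
  induction k with
  | zero => exact absurd rfl hk
  | succ k ih =>
    rcases eq_or_ne k 0 with rfl | hk'
    · simp
    · rw [Function.iterate_succ', ih hk', Tmap_comp_Tmap, pow_succ']

theorem Tmap_iterate_apply_of_mem (b n : ℕ) {x : ℝ} (hx : x ∈ Set.Ico (0 : ℝ) 1) :
    (Tmap b)^[n] x = Int.fract ((b : ℝ) ^ n * x) := by
  rcases eq_or_ne n 0 with rfl | hn
  · simp [Int.fract_eq_self.2 hx]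
  · rw [Tmap_iterate b hn, Tmap, Nat.cast_pow]

theorem hausdorffMeasure_eq_zero_of_adic_covers {M K : ℕ} (hM : 1 < M) {S : Set ℝ} {d : ℝ}
    (hd : 0 ≤ d) (hK : (K : ℝ) < (M : ℝ) ^ d) (A : ℕ → Finset ℕ) (hcard : ∀ m, (A m).card ≤ K ^ m)
    (hcover : ∀ m, S ⊆ ⋃ j ∈ A m, Set.Ico ((j : ℝ) / M ^ m) ((j + 1) / M ^ m)) :
    μH[d] S = 0 := by
  have hM0 : (0 : ℝ) < M := by positivity
  have hMd : 0 < (M : ℝ) ^ d := by positivity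
  have hdiam : ∀ m (j : ℕ), Metric.ediam (Set.Ico ((j : ℝ) / M ^ m) ((j + 1) / M ^ m))
      = ENNReal.ofReal ((M : ℝ) ^ m)⁻¹ := by
    intro m j
    rw [Real.ediam_Ico, ← sub_div, add_sub_cancel_left, one_div]
  have hsum : ∀ m, ∑ j : A m, Metric.ediam (Set.Ico ((j : ℝ) / M ^ m) ((j + 1) / M ^ m)) ^ d
      ≤ ENNReal.ofReal ((K / (M : ℝ) ^ d) ^ m) := by
    intro m
    simp only [hdiam, Finset.sum_const, Finset.card_univ, Fintype.card_coe, nsmul_eq_mul]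
    rw [ENNReal.ofReal_rpow_of_nonneg (by positivity) hd, ← ENNReal.ofReal_natCast,
      ← ENNReal.ofReal_mul (by positivity)]
    refine ENNReal.ofReal_le_ofReal ?_
    calc ((A m).card : ℝ) * (((M : ℝ) ^ m)⁻¹) ^ d
        = ((A m).card : ℝ) * (((M : ℝ) ^ d)⁻¹) ^ m := by
          rw [Real.inv_rpow (by positivity), ← Real.rpow_pow_comm hM0.le, inv_pow]
      _ ≤ (K : ℝ) ^ m * (((M : ℝ) ^ d)⁻¹) ^ m := by
          gcongr
          exact_mod_cast hcard m
      _ = (K / (M : ℝ) ^ d) ^ m := by rw [div_eq_mul_inv, mul_pow]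
  have hmesh : Tendsto (fun m : ℕ => ENNReal.ofReal ((M : ℝ) ^ m)⁻¹) atTop (𝓝 0) := by
    rw [← ENNReal.ofReal_zero]
    exact ENNReal.tendsto_ofReal
      (tendsto_inv_atTop_zero.comp (tendsto_pow_atTop_atTop_of_one_lt (by exact_mod_cast hM)))
  have hgeom : Tendsto (fun m : ℕ => ENNReal.ofReal ((K / (M : ℝ) ^ d) ^ m)) atTop (𝓝 0) := by
    rw [← ENNReal.ofReal_zero]
    exact ENNReal.tendsto_ofReal (tendsto_pow_atTop_nhds_zero_of_lt_one (by positivity)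
      ((div_lt_one hMd).2 hK))
  refine le_antisymm ?_ zero_le
  calc μH[d] S
      ≤ liminf (fun m => ∑ j : A m, Metric.ediam (Set.Ico ((j : ℝ) / M ^ m) ((j + 1) / M ^ m)) ^ d)
          atTop :=
        Measure.hausdorffMeasure_le_liminf_sum d S _ hmesh (fun m (j : A m) => _)
          (Eventually.of_forall fun m j => (hdiam m j).le)
          (Eventually.of_forall fun m => by simpa [Set.iUnion_subtype] using hcover m)
    _ ≤ liminf (fun m : ℕ => ENNReal.ofReal ((K / (M : ℝ) ^ d) ^ m)) atTop :=
        liminf_le_liminf (Eventually.of_forall hsum)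
    _ = 0 := hgeom.liminf_eq

theorem dimH_le_logb_of_adic_covers {M K : ℕ} (hM : 1 < M) {S : Set ℝ} (A : ℕ → Finset ℕ)
    (hcard : ∀ m, (A m).card ≤ K ^ m)
    (hcover : ∀ m, S ⊆ ⋃ j ∈ A m, Set.Ico ((j : ℝ) / M ^ m) ((j + 1) / M ^ m)) :
    dimH S ≤ ENNReal.ofReal (Real.logb M K) := by
  refine dimH_le fun d hd => le_of_not_gt fun hlt => ?_
  rw [← ENNReal.ofReal_coe_nnreal, ENNReal.ofReal_lt_ofReal_iff'] at hlt
  have hK : (K : ℝ) < (M : ℝ) ^ (d : ℝ) := by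
    rcases K.eq_zero_or_pos with rfl | hK
    · simp only [Nat.cast_zero]; positivity
    · exact (Real.logb_lt_iff_lt_rpow (by exact_mod_cast hM) (by exact_mod_cast hK)).1 hlt.1
  exact ENNReal.zero_ne_top
    (hausdorffMeasure_eq_zero_of_adic_covers hM d.coe_nonneg hK A hcard hcover ▸ hd)

-- `⌊M * T_M^m z⌋₊` is the `(m+1)`-st base-`M` digit of `z`.
def digitAvoidingSet (M : ℕ) (u : ℕ → ℕ) : Set ℝ :=
  {z | z ∈ Set.Ico 0 1 ∧ ∀ m, ⌊(M : ℝ) * (Tmap M)^[m] z⌋₊ ≠ u m}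

def digitAvoidingPrefixes (M : ℕ) (u : ℕ → ℕ) : ℕ → Finset ℕ
  | 0 => {0}
  | m + 1 => (digitAvoidingPrefixes M u m ×ˢ (Finset.range M).erase (u m)).image
      fun p => M * p.1 + p.2

section DigitAvoiding

variable {M : ℕ} {u : ℕ → ℕ}

theorem card_digitAvoidingPrefixes_le (hu : ∀ m, u m < M) (m : ℕ) :
    (digitAvoidingPrefixes M u m).card ≤ (M - 1) ^ m := by
  induction m with
  | zero => simp [digitAvoidingPrefixes]
  | succ m ih =>
    calc (digitAvoidingPrefixes M u (m + 1)).card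
        ≤ (digitAvoidingPrefixes M u m ×ˢ (Finset.range M).erase (u m)).card :=
          Finset.card_image_le
      _ = (digitAvoidingPrefixes M u m).card * (M - 1) := by
          rw [Finset.card_product, Finset.card_erase_of_mem (Finset.mem_range.2 (hu m)),
            Finset.card_range]
      _ ≤ (M - 1) ^ (m + 1) := by
          rw [pow_succ]
          exact Nat.mul_le_mul_right _ ih

theorem natFloor_pow_mul_mem_digitAvoidingPrefixes (hM : 0 < M) {z : ℝ}
    (hz : z ∈ digitAvoidingSet M u) (m : ℕ) :
    ⌊(M : ℝ) ^ m * z⌋₊ ∈ digitAvoidingPrefixes M u m := by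
  obtain ⟨hz01, hdigit⟩ := hz
  induction m with
  | zero => simp [digitAvoidingPrefixes, Nat.floor_eq_zero.2 hz01.2]
  | succ m ih =>
    have hsplit := natFloor_natCast_mul (by positivity [hz01.1] : 0 ≤ (M : ℝ) ^ m * z) M
    rw [← mul_assoc, ← pow_succ', ← Tmap_iterate_apply_of_mem M m hz01] at hsplit
    rw [hsplit]
    refine Finset.mem_image.2 ⟨(_, _), Finset.mem_product.2 ⟨ih, Finset.mem_erase.2
      ⟨hdigit m, Finset.mem_range.2 ?_⟩⟩, rfl⟩
    rw [Tmap_iterate_apply_of_mem M m hz01]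
    exact natFloor_natCast_mul_lt (Int.fract_lt_one _) hM

theorem digitAvoidingSet_subset_iUnion_Ico (hM : 0 < M) (m : ℕ) :
    digitAvoidingSet M u ⊆
      ⋃ j ∈ digitAvoidingPrefixes M u m, Set.Ico ((j : ℝ) / M ^ m) ((j + 1) / M ^ m) := by
  intro z hz
  refine Set.mem_biUnion (natFloor_pow_mul_mem_digitAvoidingPrefixes hM hz m) ?_
  have hMm : (0 : ℝ) < (M : ℝ) ^ m := by positivity
  rw [Set.mem_Ico, div_le_iff₀ hMm, lt_div_iff₀ hMm, mul_comm z]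
  exact ⟨Nat.floor_le (by positivity [hz.1.1]), Nat.lt_floor_add_one _⟩

theorem dimH_digitAvoidingSet_le (hM : 1 < M) (hu : ∀ m, u m < M) :
    dimH (digitAvoidingSet M u) ≤ ENNReal.ofReal (Real.logb M (M - 1)) := by
  have h := dimH_le_logb_of_adic_covers hM (digitAvoidingPrefixes M u)
    (card_digitAvoidingPrefixes_le hu) (digitAvoidingSet_subset_iUnion_Ico (by omega))
  rwa [Nat.cast_sub hM.le, Nat.cast_one] at h

end DigitAvoiding

theorem exists_pos_eventually_lt_of_liminf_ne_zero {ι : Type*} {l : Filter ι} {r : ι → ℝ}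
    (hr : 0 ≤ᶠ[l] r) (h : liminf r l ≠ 0) : ∃ ε > 0, ∀ᶠ n in l, ε < r n := by
  by_cases hcob : IsCoboundedUnder (· ≥ ·) l r
  · have hpos : 0 < liminf r l := (le_liminf_of_le hcob hr).lt_of_ne' h
    exact ⟨liminf r l / 2, half_pos hpos,
      eventually_lt_of_lt_liminf (half_lt_self hpos) (isBoundedUnder_of_eventually_ge hr)⟩
  · exact absurd (Real.liminf_of_not_isCoboundedUnder hcob) h

theorem dimH_iUnion_image_add_div_le (F : Set ℝ) (c : ℝ) :
    dimH (⋃ j : ℤ, (fun z => (j + z) / c) '' F) ≤ dimH F := by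
  rw [dimH_iUnion]
  refine iSup_le fun j => LipschitzWith.dimH_image_le (K := ‖c⁻¹‖₊) ?_ F
  refine LipschitzWith.of_dist_le_mul fun z w => ?_
  rw [Real.dist_eq, Real.dist_eq, coe_nnnorm, Real.norm_eq_abs, ← abs_mul, ← sub_div,
    add_sub_add_left_eq_sub, div_eq_inv_mul]

theorem mem_iUnion_image_of_iterate_mem {b : ℕ} (hb : 0 < b) {F : Set ℝ} {x : ℝ}
    (hx : x ∈ Set.Ico (0 : ℝ) 1) {N : ℕ} (hxF : (Tmap b)^[N] x ∈ F) :
    x ∈ ⋃ j : ℤ, (fun z => (j + z) / (b : ℝ) ^ N) '' F := by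
  refine Set.mem_iUnion.2 ⟨⌊(b : ℝ) ^ N * x⌋, _, hxF, ?_⟩
  rw [Tmap_iterate_apply_of_mem b N hx]
  dsimp only
  rw [Int.floor_add_fract]
  field_simp

theorem liminfSet_subset_iUnion_image_digitAvoidingSet {b k : ℕ} (hb : 0 < b) (hk : k ≠ 0)
    {y r : ℕ → ℝ} (hy : ∀ n, 0 ≤ y n) (hr : ∀ᶠ n in atTop, ((b ^ k : ℕ) : ℝ)⁻¹ < r n) :
    { x : ℝ | x ∈ Set.Ico (0 : ℝ) 1 ∧
        ∀ᶠ n in atTop, (Tmap b)^[n] x ∉ Metric.ball (y n) (r n) } ⊆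
      ⋃ N, ⋃ j : ℤ, (fun z => (j + z) / (b : ℝ) ^ N) ''
        digitAvoidingSet (b ^ k) fun m => ⌊((b ^ k : ℕ) : ℝ) * y (k * m + N)⌋₊ := by
  rintro x ⟨hx, hev⟩
  obtain ⟨N, hN⟩ := eventually_atTop.1 (hev.and hr)
  refine Set.mem_iUnion.2 ⟨N, mem_iUnion_image_of_iterate_mem hb hx ⟨?_, fun m => ?_⟩⟩
  · rw [Tmap_iterate_apply_of_mem b N hx]
    exact ⟨Int.fract_nonneg _, Int.fract_lt_one _⟩
  · rw [← Tmap_iterate b hk, ← Function.iterate_mul, ← Function.iterate_add_apply,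
      Tmap_iterate_apply_of_mem b _ hx]
    obtain ⟨hball, hrn⟩ := hN (k * m + N) (by omega)
    rw [Tmap_iterate_apply_of_mem b _ hx] at hball
    exact fun heq => hball ((dist_lt_inv_of_natFloor_mul_eq (by positivity)
      (Int.fract_nonneg _) (hy _) heq).trans hrn)

/-- **Theorem 1.4 (ii).** If the liminf set `K({B_n})` has full Hausdorff dimension,
then `liminf r_n = 0`. -/
theorem liminf_radius_eq_zero_of_dimH_eq_one (b : ℕ) (hb : 3 ≤ b)
    (y : ℕ → ℝ) (hy : ∀ n, y n ∈ Set.Ico (0 : ℝ) 1)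
    (r : ℕ → ℝ) (hr : ∀ n, 0 < r n)
    (hdim : dimH { x : ℝ | x ∈ Set.Ico (0 : ℝ) 1 ∧
        ∀ᶠ n in Filter.atTop, (Tmap b)^[n] x ∉ Metric.ball (y n) (r n) } = 1) :
    Filter.liminf r Filter.atTop = 0 := by
  by_contra hne
  obtain ⟨ε, hε, hrε⟩ :=
    exists_pos_eventually_lt_of_liminf_ne_zero (Eventually.of_forall fun n => (hr n).le) hne
  obtain ⟨k, hk⟩ := pow_unbounded_of_one_lt ε⁻¹ (by exact_mod_cast (by omega : 1 < b) : (1 : ℝ) < b)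
  set M := b ^ (k + 1) with hM_def
  have hM : 1 < M := Nat.one_lt_pow k.succ_ne_zero (by omega)
  have hMε : (M : ℝ)⁻¹ < ε := by
    rw [inv_lt_comm₀ (by positivity) hε, hM_def, Nat.cast_pow]
    exact hk.trans_le (pow_le_pow_right₀ (by exact_mod_cast (by omega : 1 ≤ b)) k.le_succ)
  have hlogb : Real.logb M (M - 1) < 1 := by
    rw [Real.logb_lt_iff_lt_rpow (by exact_mod_cast hM) (by rw [sub_pos]; exact_mod_cast hM),
      Real.rpow_one]
    linarith
  refine absurd hdim (ne_of_lt ?_)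
  calc _ ≤ _ := dimH_mono (liminfSet_subset_iUnion_image_digitAvoidingSet (by omega)
        k.succ_ne_zero (fun n => (hy n).1) (hrε.mono fun n => hMε.trans))
    _ = _ := dimH_iUnion _
    _ ≤ ENNReal.ofReal (Real.logb M (M - 1)) :=
        iSup_le fun N => (dimH_iUnion_image_add_div_le _ _).trans
          (dimH_digitAvoidingSet_le hM fun m => natFloor_natCast_mul_lt (hy _).2 (by positivity))
    _ < 1 := ENNReal.ofReal_lt_one.2 hlogb

end Paper
end

section
/- Let φ : ℕ → (0,∞) be a positive function. If the set E(φ) = {x ∈ [0,1) : |T_b^n(x) − x| ≥ φ(n) for all but finitely many n ≥ 1} has Hausdorff dimension 1, then liminf_{n→∞} φ(n) = 0. -/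
/-!
If `liminf φ > 0` then `φ ≥ δ > 0` eventually, so every point of `E(φ)` lies in some
`{x ∈ [0,1) : |T_bⁿ x - x| ≥ δ for all n ≥ N}`. On the `b`-adic interval `[p/bⁿ, (p+1)/bⁿ)`
the iterate `T_bⁿ` is `x ↦ bⁿx - p`, whose fixed point `p/(bⁿ - 1)` lies in the closure of that
interval, and `|T_bⁿ x - x| = (bⁿ - 1)|x - p/(bⁿ - 1)|`. Once `δ bᵐ ≥ 1`, one of the `bᵐ`
subintervals of level `n + m` touching the fixed point misses the set as soon as `n ≥ N`.
Covering the set by intervals of level `N + 1 + km` thus needs at most `b^(N+1) (bᵐ - 1)ᵏ` of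
them, so its Hausdorff dimension is at most `log (bᵐ - 1) / log bᵐ < 1`.
-/

open MeasureTheory Filter

namespace Paper

open Set Topology

theorem dimH_le_logb_of_card_cover_le {X : Type*} [EMetricSpace X] {s : Set X} {a c C : ℝ}
    (ha : 1 < a) (hc : 1 ≤ c) (t : ℕ → Finset (Set X)) (hcover : ∀ k, s ⊆ ⋃₀ ↑(t k))
    (hdiam : ∀ k, ∀ u ∈ t k, Metric.ediam u ≤ ENNReal.ofReal (a⁻¹ ^ k))
    (hcard : ∀ k, ((t k).card : ℝ) ≤ C * c ^ k) :
    dimH s ≤ ENNReal.ofReal (Real.logb a c) := by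
  borelize X
  set d := Real.logb a c
  have hd : 0 ≤ d := Real.logb_nonneg ha hc
  have hr : Tendsto (fun k : ℕ => ENNReal.ofReal (a⁻¹ ^ k)) atTop (𝓝 0) := by
    simpa using ENNReal.tendsto_ofReal
      (tendsto_pow_atTop_nhds_zero_of_lt_one (by positivity) (inv_lt_one_of_one_lt₀ ha))
  have hsum (k : ℕ) : ∑ u : t k, Metric.ediam (u : Set X) ^ d ≤ ENNReal.ofReal C := by
    have hscale : (a⁻¹ ^ k) ^ d = c⁻¹ ^ k := by
      rw [← Real.rpow_pow_comm (by positivity), Real.inv_rpow (by positivity),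
        Real.rpow_logb (by positivity) ha.ne' (by positivity)]
    calc ∑ u : t k, Metric.ediam (u : Set X) ^ d
        ≤ ∑ _u : t k, ENNReal.ofReal (c⁻¹ ^ k) := by
          gcongr with u
          rw [← hscale, ← ENNReal.ofReal_rpow_of_nonneg (by positivity) hd]
          gcongr
          exact hdiam k u u.2
      _ = ENNReal.ofReal ((t k).card * c⁻¹ ^ k) := by
          rw [Finset.sum_const, Finset.card_univ, Fintype.card_coe, nsmul_eq_mul,
            ENNReal.ofReal_mul (by positivity), ENNReal.ofReal_natCast]
      _ ≤ ENNReal.ofReal C := by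
          gcongr
          rw [inv_pow, ← div_eq_mul_inv, div_le_iff₀ (by positivity)]
          exact hcard k
  have hμ : μH[d] s ≤ ENNReal.ofReal C :=
    (Measure.hausdorffMeasure_le_liminf_sum d s _ hr (fun k (u : t k) => (u : Set X))
      (Eventually.of_forall fun k u => hdiam k u u.2)
      (Eventually.of_forall fun k => by simpa [sUnion_eq_iUnion] using hcover k)).trans
      ((liminf_le_liminf (Eventually.of_forall hsum)).trans (liminf_const _).le)
  rw [ENNReal.ofReal_eq_coe_nnreal hd]
  exact dimH_le_of_hausdorffMeasure_ne_top (ne_top_of_le_ne_top ENNReal.ofReal_ne_top hμ)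

lemma exists_pos_eventually_le_of_liminf_ne_zero {α : Type*} {f : Filter α} {u : α → ℝ}
    (hu : ∀ᶠ a in f, 0 ≤ u a) (h : liminf u f ≠ 0) : ∃ δ > 0, ∀ᶠ a in f, δ ≤ u a := by
  have hco : f.IsCoboundedUnder (· ≥ ·) u := by
    -- otherwise `u → ∞` along `f` and the real `liminf` is the junk value `0`
    by_contra hco
    exact h (by rw [liminf_eq]; exact Real.sSup_of_not_bddAbove hco)
  have hpos : 0 < liminf u f := (le_liminf_of_le hco hu).lt_of_ne' h
  exact ⟨liminf u f / 2, half_pos hpos, (eventually_lt_of_lt_liminf (half_lt_self hpos)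
    (isBoundedUnder_of_eventually_ge hu)).mono fun _ => le_of_lt⟩

lemma exists_nat_mem_Ico_mem_Icc_succ {y : ℝ} {a k : ℕ} (hk : 0 < k)
    (hy : y ∈ Icc (a : ℝ) (a + k)) :
    ∃ j ∈ Finset.Ico a (a + k), y ∈ Icc (j : ℝ) (j + 1) := by
  have hy0 : 0 ≤ y := (Nat.cast_nonneg a).trans hy.1
  refine ⟨min ⌊y⌋₊ (a + k - 1),
    Finset.mem_Ico.2 ⟨le_min (Nat.le_floor hy.1) (by omega), by omega⟩,
    (Nat.cast_le.2 (min_le_left _ _)).trans (Nat.floor_le hy0), ?_⟩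
  rcases min_choice ⌊y⌋₊ (a + k - 1) with h | h <;> rw [h]
  · exact (Nat.lt_floor_add_one y).le
  · rw [Nat.cast_sub (by omega)]
    push_cast
    linarith [hy.2]

lemma iterate_Tmap {b n : ℕ} (hn : n ≠ 0) (x : ℝ) :
    (Tmap b)^[n] x = Int.fract ((b : ℝ) ^ n * x) := by
  induction n with
  | zero => exact absurd rfl hn
  | succ n ih =>
    rcases eq_or_ne n 0 with rfl | hn'
    · simp [Tmap]
    rw [Function.iterate_succ_apply', ih hn', Tmap, Int.fract_eq_fract]
    exact ⟨-(b * ⌊(b : ℝ) ^ n * x⌋), by push_cast [Int.fract]; ring⟩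

def adicCell (b n i : ℕ) : Set ℝ := Ico (i / (b : ℝ) ^ n) ((i + 1) / (b : ℝ) ^ n)

open scoped Classical in
noncomputable def adicCells (b n : ℕ) (s : Set ℝ) : Finset ℕ :=
  {i ∈ Finset.range (b ^ n) | (s ∩ adicCell b n i).Nonempty}

section AdicCells

variable {b n m i : ℕ} {s : Set ℝ}

lemma mem_adicCells : i ∈ adicCells b n s ↔ i < b ^ n ∧ (s ∩ adicCell b n i).Nonempty := by
  classical
  simp [adicCells]

lemma card_adicCells_le : (adicCells b n s).card ≤ b ^ n := by
  classical
  exact (Finset.card_filter_le _ _).trans (Finset.card_range _).le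

lemma mem_adicCell_iff (hb : 0 < b) {x : ℝ} :
    x ∈ adicCell b n i ↔ (i : ℝ) ≤ b ^ n * x ∧ b ^ n * x < i + 1 := by
  have : (0 : ℝ) < (b : ℝ) ^ n := by positivity
  rw [adicCell, mem_Ico, div_le_iff₀' this, lt_div_iff₀' this]

lemma fract_pow_mul_of_mem_adicCell (hb : 0 < b) {x : ℝ} (hx : x ∈ adicCell b n i) :
    Int.fract ((b : ℝ) ^ n * x) = b ^ n * x - i := by
  have hfloor : ⌊(b : ℝ) ^ n * x⌋ = i :=
    Int.floor_eq_iff.2 (by exact_mod_cast (mem_adicCell_iff hb).1 hx)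
  rw [Int.fract, hfloor]
  rfl

lemma adicCell_subset_adicCell_div (hb : 0 < b) (j : ℕ) :
    adicCell b (n + m) j ⊆ adicCell b n (j / b ^ m) := by
  intro x hx
  rw [mem_adicCell_iff hb, pow_add] at hx
  rw [mem_adicCell_iff hb]
  have hB : (0 : ℝ) < (b : ℝ) ^ m := by positivity
  have hlo : ((j / b ^ m * b ^ m : ℕ) : ℝ) ≤ j := by exact_mod_cast Nat.div_mul_le_self j (b ^ m)
  have hhi : (j + 1 : ℝ) ≤ (j / b ^ m * b ^ m + b ^ m : ℕ) := by
    exact_mod_cast Nat.lt_div_mul_add (by positivity)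
  push_cast at hlo hhi
  constructor <;> nlinarith

lemma mem_adicCells_div (hb : 0 < b) {j : ℕ} (hj : j ∈ adicCells b (n + m) s) :
    j / b ^ m ∈ adicCells b n s := by
  obtain ⟨hjlt, x, hxs, hx⟩ := mem_adicCells.1 hj
  refine mem_adicCells.2 ⟨?_, x, hxs, adicCell_subset_adicCell_div hb j hx⟩
  rwa [Nat.div_lt_iff_lt_mul (by positivity), ← pow_add]

lemma subset_biUnion_adicCells (hb : 0 < b) (hs : s ⊆ Ico 0 1) :
    s ⊆ ⋃ i ∈ adicCells b n s, adicCell b n i := by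
  intro x hx
  obtain ⟨hx0, hx1⟩ := hs hx
  have hB : (1 : ℝ) ≤ (b : ℝ) ^ n := one_le_pow₀ (by exact_mod_cast hb)
  have hcell : x ∈ adicCell b n ⌊(b : ℝ) ^ n * x⌋₊ := by
    rw [mem_adicCell_iff hb]
    exact ⟨Nat.floor_le (by positivity), Nat.lt_floor_add_one _⟩
  refine mem_biUnion (mem_adicCells.2 ⟨?_, x, hx, hcell⟩) hcell
  rw [Nat.floor_lt (by positivity)]
  push_cast
  nlinarith

lemma card_adicCells_add_le (hb : 0 < b)
    (h : ∀ i ∈ adicCells b n s, ∃ j, j / b ^ m = i ∧ j ∉ adicCells b (n + m) s) :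
    (adicCells b (n + m) s).card ≤ (b ^ m - 1) * (adicCells b n s).card := by
  classical
  refine Finset.card_le_mul_card_image_of_maps_to (fun j hj => mem_adicCells_div hb hj) _ ?_
  intro i hi
  obtain ⟨j, hji, hj⟩ := h i hi
  have hB : 0 < b ^ m := by positivity
  have hj_range := (Nat.div_eq_iff hB).1 hji
  calc ((adicCells b (n + m) s).filter (fun k => k / b ^ m = i)).card
      ≤ ((Finset.Ico (i * b ^ m) (i * b ^ m + b ^ m)).erase j).card := by
        refine Finset.card_le_card fun k hk => ?_
        rw [Finset.mem_filter] at hk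
        have hk_range := (Nat.div_eq_iff hB).1 hk.2
        simp only [Finset.mem_erase, Finset.mem_Ico]
        exact ⟨fun hkj => hj (hkj ▸ hk.1), by omega, by omega⟩
    _ = b ^ m - 1 := by
        rw [Finset.card_erase_of_mem (Finset.mem_Ico.2 (by omega)), Nat.card_Ico]
        omega

end AdicCells

lemma exists_div_eq_forall_adicCell_abs_iterate_Tmap_sub_lt {b n m p : ℕ} (hb : 2 ≤ b)
    (hn : n ≠ 0) (hp : p < b ^ n) {δ : ℝ} (hδ : 1 ≤ δ * b ^ m) :
    ∃ j, j / b ^ m = p ∧ ∀ x ∈ adicCell b (n + m) j, |(Tmap b)^[n] x - x| < δ := by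
  have hb0 : 0 < b := by omega
  have hq : 2 ≤ (b : ℝ) ^ n :=
    le_trans (by exact_mod_cast hb) (le_self_pow₀ (by exact_mod_cast hb0) hn)
  have hpq : (p : ℝ) + 1 ≤ (b : ℝ) ^ n := by exact_mod_cast Nat.succ_le_of_lt hp
  have hB : 0 < (b : ℝ) ^ m := by positivity
  set q : ℝ := (b : ℝ) ^ n
  set B : ℝ := (b : ℝ) ^ m
  -- `p / (q - 1)` is the fixed point of the branch `x ↦ q x - p` of `T_bⁿ`; `y` is its rescaling
  -- to level `n + m`
  set y : ℝ := p * q * B / (q - 1)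
  have hy : y ∈ Icc ((p * b ^ m : ℕ) : ℝ) ((p * b ^ m : ℕ) + (b ^ m : ℕ)) := by
    push_cast
    constructor
    · rw [le_div_iff₀ (by linarith)]; nlinarith
    · rw [div_le_iff₀ (by linarith)]; nlinarith
  obtain ⟨j, hj, hyj⟩ := exists_nat_mem_Ico_mem_Icc_succ (by positivity) hy
  rw [Finset.mem_Ico] at hj
  have hjp : j / b ^ m = p := (Nat.div_eq_iff (by positivity)).2 ⟨by omega, by omega⟩
  refine ⟨j, hjp, fun x hx => ?_⟩
  have hxp : x ∈ adicCell b n p := hjp ▸ adicCell_subset_adicCell_div hb0 j hx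
  rw [mem_adicCell_iff hb0, pow_add] at hx
  rw [iterate_Tmap hn, fract_pow_mul_of_mem_adicCell hb0 hxp]
  have hclose : |q * B * x - y| ≤ 1 :=
    abs_le.2 ⟨by linarith [hyj.2, hx.1], by linarith [hyj.1, hx.2]⟩
  have key : q * x - p - x = (q - 1) * (q * B * x - y) / (q * B) := by
    have : q - 1 ≠ 0 := by linarith
    simp only [y]
    field_simp
    ring
  have hqB : 0 < q * B := by positivity
  rw [key, abs_div, abs_of_pos hqB, abs_mul, abs_of_pos (by linarith : 0 < q - 1),
    div_lt_iff₀ hqB]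
  nlinarith

def farOrbitSet (b : ℕ) (δ : ℝ) (N : ℕ) : Set ℝ :=
  {x ∈ Ico 0 1 | ∀ n ≥ N, δ ≤ |(Tmap b)^[n] x - x|}

section FarOrbitSet

variable {b m N : ℕ} {δ : ℝ}

lemma card_adicCells_farOrbitSet_add_le (hb : 2 ≤ b) (hδ : 1 ≤ δ * b ^ m) {n : ℕ} (hn : n ≠ 0)
    (hNn : N ≤ n) :
    (adicCells b (n + m) (farOrbitSet b δ N)).card ≤
      (b ^ m - 1) * (adicCells b n (farOrbitSet b δ N)).card := by
  refine card_adicCells_add_le (by omega) fun p hp => ?_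
  obtain ⟨j, hjp, hj⟩ :=
    exists_div_eq_forall_adicCell_abs_iterate_Tmap_sub_lt hb hn (mem_adicCells.1 hp).1 hδ
  refine ⟨j, hjp, fun hjE => ?_⟩
  obtain ⟨x, hxE, hx⟩ := (mem_adicCells.1 hjE).2
  exact (hj x hx).not_ge (hxE.2 n hNn)

lemma card_adicCells_farOrbitSet_le (hb : 2 ≤ b) (hδ : 1 ≤ δ * b ^ m) (k : ℕ) :
    (adicCells b (N + 1 + k * m) (farOrbitSet b δ N)).card ≤ (b ^ m - 1) ^ k * b ^ (N + 1) := by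
  induction k with
  | zero => simpa using card_adicCells_le
  | succ k ih =>
    rw [add_mul, one_mul, ← add_assoc]
    calc _ ≤ (b ^ m - 1) * (adicCells b (N + 1 + k * m) (farOrbitSet b δ N)).card :=
          card_adicCells_farOrbitSet_add_le hb hδ (by omega) (by omega)
      _ ≤ (b ^ m - 1) * ((b ^ m - 1) ^ k * b ^ (N + 1)) := Nat.mul_le_mul_left _ ih
      _ = (b ^ m - 1) ^ (k + 1) * b ^ (N + 1) := by ring

lemma dimH_farOrbitSet_le (hb : 2 ≤ b) (hm : m ≠ 0) (hδ : 1 ≤ δ * b ^ m) (N : ℕ) :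
    dimH (farOrbitSet b δ N) ≤ ENNReal.ofReal (Real.logb ((b : ℝ) ^ m) ((b : ℝ) ^ m - 1)) := by
  classical
  have hb1 : (1 : ℝ) ≤ b := by exact_mod_cast (by omega : 1 ≤ b)
  have hB : (2 : ℝ) ≤ (b : ℝ) ^ m := le_trans (by exact_mod_cast hb) (le_self_pow₀ hb1 hm)
  refine dimH_le_logb_of_card_cover_le (C := (b : ℝ) ^ (N + 1)) (by linarith) (by linarith)
    (fun k => (adicCells b (N + 1 + k * m) (farOrbitSet b δ N)).image (adicCell b (N + 1 + k * m)))
    (fun k => ?_) (fun k u hu => ?_) (fun k => ?_)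
  · rw [Finset.coe_image, sUnion_image]
    exact subset_biUnion_adicCells (by omega) fun x hx => hx.1
  · obtain ⟨i, -, rfl⟩ := Finset.mem_image.1 hu
    rw [adicCell, Real.ediam_Ico]
    refine ENNReal.ofReal_le_ofReal ?_
    rw [← sub_div, add_sub_cancel_left, inv_pow, ← pow_mul, one_div]
    exact inv_anti₀ (by positivity) (pow_le_pow_right₀ hb1 (by nlinarith))
  · calc (((adicCells b (N + 1 + k * m) (farOrbitSet b δ N)).image _).card : ℝ)
        ≤ (adicCells b (N + 1 + k * m) (farOrbitSet b δ N)).card :=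
          Nat.cast_le.2 Finset.card_image_le
      _ ≤ ((b ^ m - 1) ^ k * b ^ (N + 1) : ℕ) :=
          Nat.cast_le.2 (card_adicCells_farOrbitSet_le hb hδ k)
      _ = (b : ℝ) ^ (N + 1) * ((b : ℝ) ^ m - 1) ^ k := by
        rw [Nat.cast_mul, Nat.cast_pow, Nat.cast_sub (Nat.one_le_pow _ _ (by omega)), mul_comm]
        push_cast
        ring

theorem dimH_iUnion_farOrbitSet_lt_one (hb : 2 ≤ b) (hδ : 0 < δ) :
    dimH (⋃ N, farOrbitSet b δ N) < 1 := by
  have hb1 : (1 : ℝ) < b := by exact_mod_cast hb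
  obtain ⟨m, hm⟩ := pow_unbounded_of_one_lt δ⁻¹ hb1
  have hB : 1 < (b : ℝ) ^ (m + 1) := one_lt_pow₀ hb1 (by omega)
  have hδm : 1 ≤ δ * (b : ℝ) ^ (m + 1) := by
    rw [inv_lt_iff_one_lt_mul₀ hδ] at hm
    nlinarith [mul_le_mul_of_nonneg_left (pow_le_pow_right₀ hb1.le (Nat.le_add_right m 1)) hδ.le]
  rw [dimH_iUnion]
  refine (iSup_le fun N => dimH_farOrbitSet_le hb (by omega) hδm N).trans_lt ?_
  rw [ENNReal.ofReal_lt_one]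
  exact (Real.logb_lt_logb hB (by linarith) (by linarith)).trans_eq (Real.logb_self_eq_one hB)

end FarOrbitSet

/-- **Theorem 1.5 (ii).** If the set `E(φ)` has full Hausdorff dimension, then
`liminf φ(n) = 0`. -/
theorem liminf_phi_eq_zero_of_dimH_eq_one (b : ℕ) (hb : 3 ≤ b)
    (φ : ℕ → ℝ) (hφ : ∀ n, 1 ≤ n → 0 < φ n)
    (hdim : dimH { x : ℝ | x ∈ Set.Ico (0 : ℝ) 1 ∧
        ∀ᶠ n in Filter.atTop, φ n ≤ |(Tmap b)^[n] x - x| } = 1) :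
    Filter.liminf φ Filter.atTop = 0 := by
  by_contra hne
  obtain ⟨δ, hδ, hδφ⟩ := exists_pos_eventually_le_of_liminf_ne_zero
    (eventually_atTop.2 ⟨1, fun n hn => (hφ n hn).le⟩) hne
  have hsub : { x : ℝ | x ∈ Set.Ico (0 : ℝ) 1 ∧
      ∀ᶠ n in Filter.atTop, φ n ≤ |(Tmap b)^[n] x - x| } ⊆ ⋃ N, farOrbitSet b δ N := by
    rintro x ⟨hx, hxφ⟩
    obtain ⟨N, hN⟩ := eventually_atTop.1 (hδφ.and hxφ)
    exact mem_iUnion.2 ⟨N, hx, fun n hn => (hN n hn).1.trans (hN n hn).2⟩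
  exact (dimH_iUnion_farOrbitSet_lt_one (by omega) hδ).not_ge (hdim ▸ dimH_mono hsub)

end Paper
end

section
/- For every sequence ω ∈ (D_b^m)^{ℕ₀} and every k ∈ ℕ, the cardinalities of the sets Σ_k^ω satisfy (b−1)·|Σ_k^ω| ≤ |Σ_{k+1}^ω| ≤ b·|Σ_k^ω|. -/
open MeasureTheory Filter

namespace Paper


/-- The set `Σ_k^ω` of admissible words of length `k`. -/
def SigmaSet (b m : ℕ) (ω : ℕ → Fin m → Fin b) (k : ℕ) : Set (Fin k → Fin b) :=
  { d | ∀ (i : ℕ) (hi : i + m ≤ k),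
      (fun j : Fin m => d ⟨i + j.1, by have := j.isLt; omega⟩) ≠ ω i }

/-- The survivor set `K^ω ⊆ [0,1]`. -/
def Kset (b m : ℕ) (ω : ℕ → Fin m → Fin b) : Set ℝ :=
  { x | ∃ d : ℕ → Fin b,
      (∀ k : ℕ, (fun j : Fin m => d (k + j.1)) ≠ ω k) ∧
      x = ∑' i : ℕ, ((d i : ℕ) : ℝ) / (b : ℝ) ^ (i + 1) }

open Classical in
/-- The adjacency matrix `A_d` of the subshift of finite type with forbidden word `d`. -/
noncomputable def adjMat (b m : ℕ) (d : Fin m → Fin b) :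
    Matrix (Fin (m - 1) → Fin b) (Fin (m - 1) → Fin b) ℝ :=
  fun u v =>
    if ((∀ (i : ℕ) (h : i + 1 < m - 1), u ⟨i + 1, h⟩ = v ⟨i, by omega⟩) ∧
        ¬ ((∀ (j : ℕ) (h : j < m - 1), u ⟨j, h⟩ = d ⟨j, by omega⟩) ∧
           (∀ (h2 : m - 2 < m - 1), v ⟨m - 2, h2⟩ = d ⟨m - 1, by omega⟩)))
    then 1 else 0

/-- The norm `‖M‖ = ∑_{i,j} |m_{ij}|` of a real square matrix. -/
noncomputable def matNorm {n : Type*} [Fintype n] (M : Matrix n n ℝ) : ℝ :=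
  ∑ i, ∑ j, |M i j|

/-- The product `A_{ω^0} A_{ω^1} ⋯ A_{ω^{n-1}}`. -/
noncomputable def prodA (b m : ℕ) (ω : ℕ → Fin m → Fin b) (n : ℕ) :
    Matrix (Fin (m - 1) → Fin b) (Fin (m - 1) → Fin b) ℝ :=
  ((List.range n).map (fun i => adjMat b m (ω i))).prod

/-- `ω` is progressively overlapping at position `k`. -/
def ProgOverlapAt (b m : ℕ) (ω : ℕ → Fin m → Fin b) (k : ℕ) : Prop :=
  ∀ j : ℕ, 1 ≤ j → j ≤ min k (m - 1) →
    ∀ (t : ℕ) (h : t + j < m),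
      ω k ⟨t, by omega⟩ = ω (k - j) ⟨t + j, h⟩

/-- `ω` is totally distinct at position `k`. -/
def TotDistinctAt (b m : ℕ) (ω : ℕ → Fin m → Fin b) (k : ℕ) : Prop :=
  ∀ j : ℕ, 1 ≤ j → j ≤ min k (m - 1) →
    ¬ (∀ (t : ℕ) (h : t + j < m),
        ω k ⟨t, by omega⟩ = ω (k - j) ⟨t + j, h⟩)

/-- A set `F ⊆ ℝ` is `s`-Ahlfors regular. -/
def AhlforsRegular (F : Set ℝ) (s : ℝ) : Prop :=
  ∃ c : ℝ, 1 ≤ c ∧ ∀ x ∈ F, ∀ r : ℝ, 0 < r → r < 1 →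
    ENNReal.ofReal (c⁻¹ * r ^ s) ≤ Measure.hausdorffMeasure s (F ∩ Metric.closedBall x r) ∧
    Measure.hausdorffMeasure s (F ∩ Metric.closedBall x r) ≤ ENNReal.ofReal (c * r ^ s)

/-!
Dropping the last letter maps `Σ_{k+1}` into `Σ_k`. A one-letter extension `e a` of `e ∈ Σ_k`
contains exactly one window not already inside `e`, namely the last one, and that window equals
`ω^{k+1-m}` for at most one letter `a`. So every fibre has between `b - 1` and `b` elements.
-/

open Finset

section SnocCounting

variable {α : Type*} [Fintype α] [DecidableEq α] {k : ℕ}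

theorem card_filter_init_eq (T : Finset (Fin (k + 1) → α)) (e : Fin k → α) :
    #{d ∈ T | Fin.init d = e} = #{a | (Fin.snoc e a : Fin (k + 1) → α) ∈ T} := by
  refine Finset.card_nbij' (fun d => d (Fin.last k)) (fun a => Fin.snoc e a) ?_ ?_ ?_ ?_
  · intro d hd
    obtain ⟨hdT, rfl⟩ := Finset.mem_filter.mp hd
    simpa [Fin.snoc_init_self] using hdT
  · intro a ha
    simp only [Finset.coe_filter, Finset.mem_univ, true_and, Set.mem_ofPred_eq] at ha ⊢
    exact ⟨ha, Fin.init_snoc _ _⟩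
  · intro d hd
    obtain ⟨-, rfl⟩ := Finset.mem_filter.mp hd
    exact Fin.snoc_init_self d
  · intro a _
    exact Fin.snoc_last _ _

variable {S : Finset (Fin k → α)} {T : Finset (Fin (k + 1) → α)}

theorem card_eq_sum_card_snoc_mem (hST : ∀ d ∈ T, Fin.init d ∈ S) :
    #T = ∑ e ∈ S, #{a | (Fin.snoc e a : Fin (k + 1) → α) ∈ T} := by
  rw [Finset.card_eq_sum_card_fiberwise hST]
  exact Finset.sum_congr rfl fun e _ => card_filter_init_eq T e

theorem card_le_card_mul_card (hST : ∀ d ∈ T, Fin.init d ∈ S) :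
    #T ≤ Fintype.card α * #S := by
  rw [card_eq_sum_card_snoc_mem hST, mul_comm, ← smul_eq_mul, ← Finset.sum_const]
  exact Finset.sum_le_sum fun e _ => Finset.card_filter_le _ _

theorem card_sub_one_mul_card_le_card (hST : ∀ d ∈ T, Fin.init d ∈ S)
    (hbad : ∀ e ∈ S, {a | (Fin.snoc e a : Fin (k + 1) → α) ∉ T}.Subsingleton) :
    (Fintype.card α - 1) * #S ≤ #T := by
  rw [card_eq_sum_card_snoc_mem hST, mul_comm, ← smul_eq_mul, ← Finset.sum_const]
  refine Finset.sum_le_sum fun e he => ?_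
  have hsplit := Finset.card_filter_add_card_filter_not (s := Finset.univ)
    (fun a : α => (Fin.snoc e a : Fin (k + 1) → α) ∈ T)
  have hbad_le : #{a | (Fin.snoc e a : Fin (k + 1) → α) ∉ T} ≤ 1 :=
    Finset.card_le_one.mpr fun a ha a' ha' => hbad e he (by simpa using ha) (by simpa using ha')
  rw [Finset.card_univ] at hsplit
  omega

end SnocCounting

variable {b m : ℕ} (ω : ℕ → Fin m → Fin b) {k : ℕ}

theorem init_mem_sigmaSet {d : Fin (k + 1) → Fin b} (hd : d ∈ SigmaSet b m ω (k + 1)) :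
    Fin.init d ∈ SigmaSet b m ω k :=
  fun i hi => hd i (by omega)

theorem eq_of_snoc_notMem_sigmaSet {e : Fin k → Fin b} (he : e ∈ SigmaSet b m ω k) {a : Fin b}
    (ha : (Fin.snoc e a : Fin (k + 1) → Fin b) ∉ SigmaSet b m ω (k + 1)) :
    ∃ h : 0 < m, a = ω (k + 1 - m) ⟨m - 1, by omega⟩ := by
  -- For `m = 0` the empty window always matches `ω 0`, so `Σ_k` is empty.
  rcases Nat.eq_zero_or_pos m with rfl | hm
  · exact absurd (Subsingleton.elim _ _) (he 0 (Nat.zero_le k))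
  simp only [SigmaSet, Set.mem_ofPred_eq, not_forall, not_not] at ha
  obtain ⟨i, hi, hwin⟩ := ha
  by_cases hik : i + m ≤ k
  · refine absurd ?_ (he i hik)
    rw [← hwin]
    funext j
    simp [Fin.snoc, show i + j.1 < k by omega]
  · refine ⟨hm, ?_⟩
    obtain rfl : i = k + 1 - m := by omega
    have := congrFun hwin ⟨m - 1, by omega⟩
    simpa [Fin.snoc, show ¬ (k + 1 - m + (m - 1) < k) by omega] using this

theorem subsingleton_snoc_notMem_sigmaSet {e : Fin k → Fin b} (he : e ∈ SigmaSet b m ω k) :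
    {a | (Fin.snoc e a : Fin (k + 1) → Fin b) ∉ SigmaSet b m ω (k + 1)}.Subsingleton := by
  intro a ha a' ha'
  obtain ⟨_, rfl⟩ := eq_of_snoc_notMem_sigmaSet ω he ha
  obtain ⟨_, rfl⟩ := eq_of_snoc_notMem_sigmaSet ω he ha'
  rfl

theorem card_sigma_growth_general (b m : ℕ)
    (ω : ℕ → Fin m → Fin b) (k : ℕ) :
    (b - 1) * Nat.card ↥(SigmaSet b m ω k) ≤ Nat.card ↥(SigmaSet b m ω (k + 1)) ∧
    Nat.card ↥(SigmaSet b m ω (k + 1)) ≤ b * Nat.card ↥(SigmaSet b m ω k) := by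
  classical
  have hinit : ∀ d ∈ (SigmaSet b m ω (k + 1)).toFinset,
      Fin.init d ∈ (SigmaSet b m ω k).toFinset := by
    simpa using fun d => init_mem_sigmaSet ω
  have hbad : ∀ e ∈ (SigmaSet b m ω k).toFinset,
      {a | (Fin.snoc e a : Fin (k + 1) → Fin b) ∉ (SigmaSet b m ω (k + 1)).toFinset}.Subsingleton := by
    simpa using fun e => subsingleton_snoc_notMem_sigmaSet ω (e := e)
  have lower := card_sub_one_mul_card_le_card hinit hbad
  have upper := card_le_card_mul_card hinit
  rw [Fintype.card_fin] at lower upper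
  simpa only [Nat.card_eq_card_toFinset] using ⟨lower, upper⟩

/-- **Lemma 2.1.** For every `ω` and `k ≥ 1`, `(b-1)|Σ_k^ω| ≤ |Σ_{k+1}^ω| ≤ b|Σ_k^ω|`. -/
theorem card_sigma_growth (b m : ℕ) (hb : 3 ≤ b) (hm : 2 ≤ m)
    (ω : ℕ → Fin m → Fin b) (k : ℕ) (hk : 1 ≤ k) :
    (b - 1) * Nat.card ↥(SigmaSet b m ω k) ≤ Nat.card ↥(SigmaSet b m ω (k + 1)) ∧
    Nat.card ↥(SigmaSet b m ω (k + 1)) ≤ b * Nat.card ↥(SigmaSet b m ω k) :=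
  card_sigma_growth_general b m ω k

end Paper
end

section
/- Let ω ∈ (D_b^m)^{ℕ₀} and k ≥ m. Then for every word c ∈ Σ_k^ω and every n ∈ ℕ, the set Σ_{k+n}^ω(c) = {d_1…d_{k+n} ∈ Σ_{k+n}^ω : d_1…d_k = c} satisfies b^{−(m−1)} · |Σ_{k+n}^ω| / |Σ_k^ω| ≤ |Σ_{k+n}^ω(c)| ≤ b^{m−1} · |Σ_{k+n}^ω| / |Σ_k^ω|. -/
open MeasureTheory Filter

namespace Paper


/-- The set `Σ_{k+n}^ω(c)` of words in `Σ_{k+n}^ω` extending the word `c` of length `k`. -/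
def SigmaExt (b m : ℕ) (ω : ℕ → Fin m → Fin b) (k n : ℕ) (c : Fin k → Fin b) :
    Set (Fin (k + n) → Fin b) :=
  { d | d ∈ SigmaSet b m ω (k + n) ∧
      ∀ i : Fin k, d (Fin.castLE (Nat.le_add_right k n) i) = c i }

lemma exists_ne_pair (b : ℕ) (hb : 3 ≤ b) (x y : Fin b) : ∃ z : Fin b, z ≠ x ∧ z ≠ y := by
  classical
  have h2 : ({x, y} : Finset (Fin b)).card ≤ 2 := Finset.card_insert_le _ _ |>.trans (by simp)
  have hcard : 0 < ({x, y}ᶜ : Finset (Fin b)).card := by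
    rw [Finset.card_compl]
    simp only [Fintype.card_fin]
    omega
  obtain ⟨z, hz⟩ := Finset.card_pos.mp hcard
  rw [Finset.mem_compl, Finset.mem_insert, Finset.mem_singleton] at hz
  exact ⟨z, fun h => hz (Or.inl h), fun h => hz (Or.inr h)⟩

lemma restrict_mem (b m : ℕ) (ω : ℕ → Fin m → Fin b) (k n : ℕ)
    (d : Fin (k + n) → Fin b) (hd : d ∈ SigmaSet b m ω (k + n)) :
    (fun i : Fin k => d (Fin.castLE (Nat.le_add_right k n) i)) ∈ SigmaSet b m ω k := by
  intro i hi heq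
  exact hd i (by omega) heq

/-- glue: prefix c, middle a, tail d'. -/
noncomputable def glue (b m k n : ℕ) (c : Fin k → Fin b)
    (a : ℕ → Fin b) (d' : Fin (k + n) → Fin b) : Fin (k + n) → Fin b :=
  fun j => if h : (j : ℕ) < k then c ⟨j, h⟩
    else if h2 : (j : ℕ) < k + min (m - 1) n then a ((j : ℕ) - k)
    else d' j

lemma glue_mem (b m : ℕ) (hb : 3 ≤ b) (hm : 2 ≤ m)
    (ω : ℕ → Fin m → Fin b) (k n : ℕ) (hk : m ≤ k) (hn : 1 ≤ n)
    (c : Fin k → Fin b) (hc : c ∈ SigmaSet b m ω k) :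
    ∃ a : ℕ → Fin b, ∀ d', d' ∈ SigmaSet b m ω (k + n) →
      glue b m k n c a d' ∈ SigmaExt b m ω k n c := by
  have h0 : 0 < m := by omega
  have h1m : m - 1 < m := by omega
  have hpick : ∀ q : ℕ, ∃ z : Fin b,
      (∀ i', k + q = i' → z ≠ ω i' ⟨0, h0⟩) ∧
      (∀ i', k + q + 1 = i' + m → z ≠ ω i' ⟨m - 1, h1m⟩) := by
    intro q
    obtain ⟨z, hz1, hz2⟩ :=
      exists_ne_pair b hb (ω (k + q) ⟨0, h0⟩) (ω (k + q + 1 - m) ⟨m - 1, h1m⟩)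
    exact ⟨z, fun i' h => h ▸ hz1,
      fun i' h => (show k + q + 1 - m = i' by omega) ▸ hz2⟩
  refine ⟨fun q => (hpick q).choose, fun d' hd' => ?_⟩
  constructor
  · -- membership in SigmaSet (k+n)
    intro i hi heq
    by_cases h1 : i + m ≤ k
    · refine hc i h1 ?_
      funext jj
      have h := congrFun heq jj
      simp only [glue, Fin.val_mk] at h
      rw [dif_pos (show i + (jj : ℕ) < k by have := jj.isLt; omega)] at h
      exact h
    · by_cases h2 : i < k
      · -- left constraint
        have h := congrFun heq ⟨m - 1, h1m⟩
        simp only [glue, Fin.val_mk] at h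
        rw [dif_neg (show ¬ i + (m - 1) < k by omega),
          dif_pos (show i + (m - 1) < k + min (m - 1) n by omega)] at h
        exact (hpick (i + (m - 1) - k)).choose_spec.2 i (by omega) h
      · by_cases h3 : i < k + min (m - 1) n
        · -- right constraint
          have h := congrFun heq ⟨0, h0⟩
          simp only [glue, Fin.val_mk] at h
          rw [dif_neg (show ¬ i + 0 < k by omega),
            dif_pos (show i + 0 < k + min (m - 1) n by omega)] at h
          exact (hpick (i + 0 - k)).choose_spec.1 i (by omega) h
        · -- tail constraint
          refine hd' i hi ?_
          funext jj
          have h := congrFun heq jj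
          simp only [glue, Fin.val_mk] at h
          rw [dif_neg (show ¬ i + (jj : ℕ) < k by omega),
            dif_neg (show ¬ i + (jj : ℕ) < k + min (m - 1) n by omega)] at h
          exact h
  · intro i
    simp only [glue, Fin.coe_castLE]
    rw [dif_pos i.isLt, Fin.eta]

lemma cardA (b m : ℕ) (hb : 3 ≤ b) (hm : 2 ≤ m)
    (ω : ℕ → Fin m → Fin b) (k n : ℕ) (hk : m ≤ k) (hn : 1 ≤ n)
    (c c' : Fin k → Fin b) (hc : c ∈ SigmaSet b m ω k) :
    Nat.card ↥(SigmaExt b m ω k n c') ≤ b ^ (m - 1) * Nat.card ↥(SigmaExt b m ω k n c) := by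
  obtain ⟨a, ha⟩ := glue_mem b m hb hm ω k n hk hn c hc
  set r := min (m - 1) n with hr
  have hr' : r ≤ n := min_le_right _ _
  have key : Nat.card ↥(SigmaExt b m ω k n c') ≤
      Nat.card ((Fin r → Fin b) × ↥(SigmaExt b m ω k n c)) := by
    refine Nat.card_le_card_of_injective
      (fun d : ↥(SigmaExt b m ω k n c') =>
        (((fun q : Fin r => (d : Fin (k+n) → Fin b) ⟨k + q, by have := q.isLt; omega⟩),
          ⟨glue b m k n c a d, ha d d.2.1⟩) :
          (Fin r → Fin b) × ↥(SigmaExt b m ω k n c))) ?_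
    intro d1 d2 hEq
    rw [Prod.mk.injEq] at hEq
    obtain ⟨hmid, hglue⟩ := hEq
    rw [Subtype.mk.injEq] at hglue
    apply Subtype.ext
    funext j
    by_cases h1 : (j : ℕ) < k
    · have e1 := d1.2.2 ⟨j, h1⟩
      have e2 := d2.2.2 ⟨j, h1⟩
      have hj : Fin.castLE (Nat.le_add_right k n) (⟨(j:ℕ), h1⟩ : Fin k) = j := by
        apply Fin.ext; simp [Fin.castLE]
      rw [hj] at e1 e2
      rw [e1, e2]
    · by_cases h2 : (j : ℕ) < k + r
      · have := congrFun hmid ⟨(j : ℕ) - k, by omega⟩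
        simp only [Fin.val_mk] at this
        have hj : (⟨k + ((j:ℕ) - k), by omega⟩ : Fin (k + n)) = j := by
          apply Fin.ext; simp; omega
        rw [hj] at this
        exact this
      · have := congrFun hglue j
        simp only [glue] at this
        rw [dif_neg h1, dif_neg h2, dif_neg h1, dif_neg h2] at this
        exact this
  calc Nat.card ↥(SigmaExt b m ω k n c') ≤ _ := key
    _ = b ^ r * Nat.card ↥(SigmaExt b m ω k n c) := by
        rw [Nat.card_prod]; congr 1; simp [Nat.card_eq_fintype_card]
    _ ≤ b ^ (m - 1) * Nat.card ↥(SigmaExt b m ω k n c) := by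
        apply Nat.mul_le_mul_right
        exact Nat.pow_le_pow_right (by omega) (by omega)

lemma cardB (b m : ℕ) (ω : ℕ → Fin m → Fin b) (k n : ℕ) :
    Nat.card ↥(SigmaSet b m ω (k + n)) =
      ∑ c' ∈ (Set.toFinite (SigmaSet b m ω k)).toFinset,
        Nat.card ↥(SigmaExt b m ω k n c') := by
  classical
  rw [Nat.card_coe_set_eq, Set.ncard_eq_toFinset_card _ (Set.toFinite _)]
  rw [Finset.card_eq_sum_card_fiberwise
    (f := fun d => fun i : Fin k => d (Fin.castLE (Nat.le_add_right k n) i))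
    (t := (Set.toFinite (SigmaSet b m ω k)).toFinset)
    (fun d hd => (Set.toFinite _).mem_toFinset.mpr
      (restrict_mem b m ω k n d ((Set.toFinite _).mem_toFinset.mp hd)))]
  refine Finset.sum_congr rfl (fun c' _ => ?_)
  rw [Nat.card_coe_set_eq, Set.ncard_eq_toFinset_card _ (Set.toFinite _)]
  congr 1
  ext d
  simp only [Set.Finite.mem_toFinset, Finset.mem_filter, SigmaExt, Set.mem_setOf_eq]
  rw [funext_iff]

/-- **Lemma 2.2.** For `k ≥ m`, `c ∈ Σ_k^ω` and `n ≥ 1`, the cardinality of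
`Σ_{k+n}^ω(c)` is comparable to the average `|Σ_{k+n}^ω| / |Σ_k^ω|` within a
factor `b^{m-1}`. -/
theorem card_sigma_ext (b m : ℕ) (hb : 3 ≤ b) (hm : 2 ≤ m)
    (ω : ℕ → Fin m → Fin b) (k : ℕ) (hk : m ≤ k)
    (c : Fin k → Fin b) (hc : c ∈ SigmaSet b m ω k) (n : ℕ) (hn : 1 ≤ n) :
    ((b : ℝ) ^ (m - 1))⁻¹ *
        ((Nat.card ↥(SigmaSet b m ω (k + n)) : ℝ) / (Nat.card ↥(SigmaSet b m ω k) : ℝ)) ≤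
      (Nat.card ↥(SigmaExt b m ω k n c) : ℝ) ∧
    (Nat.card ↥(SigmaExt b m ω k n c) : ℝ) ≤
      (b : ℝ) ^ (m - 1) *
        ((Nat.card ↥(SigmaSet b m ω (k + n)) : ℝ) / (Nat.card ↥(SigmaSet b m ω k) : ℝ)) := by
  classical
  set T := (Set.toFinite (SigmaSet b m ω k)).toFinset with hT
  have hcT : c ∈ T := (Set.toFinite _).mem_toFinset.mpr hc
  have hSk : Nat.card ↥(SigmaSet b m ω k) = T.card := by
    rw [Nat.card_coe_set_eq, Set.ncard_eq_toFinset_card _ (Set.toFinite _)]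
  have hT1 : 1 ≤ T.card := Finset.card_pos.mpr ⟨c, hcT⟩
  have hB := cardB b m ω k n
  -- upper bound on Nat.card of SigmaSet (k+n)
  have hup : Nat.card ↥(SigmaSet b m ω (k + n)) ≤
      T.card * (b ^ (m - 1) * Nat.card ↥(SigmaExt b m ω k n c)) := by
    rw [hB]
    calc ∑ c' ∈ T, Nat.card ↥(SigmaExt b m ω k n c')
        ≤ T.card • (b ^ (m - 1) * Nat.card ↥(SigmaExt b m ω k n c)) := by
          apply Finset.sum_le_card_nsmul
          intro c' _
          exact cardA b m hb hm ω k n hk hn c c' hc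
      _ = _ := by simp
  have hlo : T.card * Nat.card ↥(SigmaExt b m ω k n c) ≤
      b ^ (m - 1) * Nat.card ↥(SigmaSet b m ω (k + n)) := by
    rw [hB, Finset.mul_sum]
    calc T.card * Nat.card ↥(SigmaExt b m ω k n c)
        = T.card • Nat.card ↥(SigmaExt b m ω k n c) := by simp
      _ ≤ ∑ c' ∈ T, b ^ (m - 1) * Nat.card ↥(SigmaExt b m ω k n c') := by
          apply Finset.card_nsmul_le_sum
          intro c' hc'
          exact cardA b m hb hm ω k n hk hn c' c ((Set.toFinite _).mem_toFinset.mp hc')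
  -- pass to the reals
  have hbR : (0:ℝ) < (b:ℝ) ^ (m - 1) := by positivity
  have hTR : (0:ℝ) < (T.card : ℝ) := by exact_mod_cast hT1
  have hupR : (Nat.card ↥(SigmaSet b m ω (k + n)) : ℝ) ≤
      (T.card : ℝ) * ((b:ℝ) ^ (m - 1) * (Nat.card ↥(SigmaExt b m ω k n c) : ℝ)) := by
    exact_mod_cast hup
  have hloR : (T.card : ℝ) * (Nat.card ↥(SigmaExt b m ω k n c) : ℝ) ≤
      (b:ℝ) ^ (m - 1) * (Nat.card ↥(SigmaSet b m ω (k + n)) : ℝ) := by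
    exact_mod_cast hlo
  rw [hSk]
  constructor
  · rw [inv_mul_le_iff₀ hbR, div_le_iff₀ hTR]
    nlinarith
  · rw [← mul_div_assoc, le_div_iff₀ hTR]
    nlinarith

end Paper
end

section
/- For every sequence ω = ω^0ω^1… ∈ (D_b^m)^{ℕ₀} and every integer k ≥ m, the cardinality of Σ_k^ω equals the norm of the matrix product: |Σ_k^ω| = ‖A_{ω^0} A_{ω^1} ⋯ A_{ω^{k−m}}‖. -/
open MeasureTheory Filter

namespace Paper


/-! Entry `(u, v)` of `A_{ω^0} ⋯ A_{ω^{n-1}}` counts the admissible words of length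
`n + m - 1` that begin with the block `u` and end with the block `v` (blocks of length `m - 1`).
This is proved by induction on `n`, starting from `n = 0`, where the empty product is the
identity and every word of length `m - 1` is admissible. An admissible word of length `k + 1` is an
admissible word of length `k` followed by one letter; the new last `m`-block, which starts with the
old final `(m - 1)`-block `w` and ends with the new one `v`, must differ from `ω^{k+1-m}`, and this
is exactly the condition `A_{ω^{k+1-m}}(w, v) = 1`. Summing over `u` and `v` gives `|Σ_k^ω|`. -/

open Finset

variable {α : Type*} {b m : ℕ}

/-- In the paper's 1-based indexing, `window d i n` is the block `d_{i+1} … d_{i+n}`. -/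
def window {k : ℕ} (d : Fin k → α) (i n : ℕ) (h : i + n ≤ k) : Fin n → α :=
  fun j => d ⟨i + j, by omega⟩

lemma window_eq_self {k : ℕ} (d : Fin k → α) (i : ℕ) (h : i + k ≤ k) : window d i k h = d := by
  funext j
  exact congrArg d (Fin.ext (by simp; omega))

lemma window_window {k : ℕ} (d : Fin k → α) {i n j n' l : ℕ} (h : i + n ≤ k) (h' : j + n' ≤ n)
    (hl : i + j = l) : window (window d i n h) j n' h' = window d l n' (by omega) := by
  funext t
  exact congrArg d (Fin.ext (by simp; omega))

lemma window_init {k : ℕ} (d : Fin (k + 1) → α) {i n : ℕ} (h : i + n ≤ k) :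
    window (Fin.init d) i n h = window d i n (by omega) := rfl

lemma mem_sigmaSet_iff (ω : ℕ → Fin m → Fin b) {k : ℕ} (d : Fin k → Fin b) :
    d ∈ SigmaSet b m ω k ↔ ∀ (i : ℕ) (hi : i + m ≤ k), window d i m hi ≠ ω i := Iff.rfl

lemma mem_sigmaSet_succ (ω : ℕ → Fin m → Fin b) (hm : 1 ≤ m) {k : ℕ} (hk : m - 1 ≤ k)
    (d : Fin (k + 1) → Fin b) :
    d ∈ SigmaSet b m ω (k + 1) ↔
      Fin.init d ∈ SigmaSet b m ω k ∧ window d (k - (m - 1)) m (by omega) ≠ ω (k - (m - 1)) := by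
  simp only [mem_sigmaSet_iff, window_init]
  constructor
  · exact fun hd => ⟨fun i hi => hd i (by omega), hd _ _⟩
  · rintro ⟨hinit, hlast⟩ i hi
    rcases Nat.lt_or_ge (i + m) (k + 1) with hlt | hge
    · exact hinit i (by omega)
    · obtain rfl : i = k - (m - 1) := by omega
      exact hlast

def IsEdge (c : Fin m → α) (w v : Fin (m - 1) → α) : Prop :=
  (∀ (i : ℕ) (h : i + 1 < m - 1), w ⟨i + 1, h⟩ = v ⟨i, by omega⟩) ∧
    ¬ ((∀ (j : ℕ) (h : j < m - 1), w ⟨j, h⟩ = c ⟨j, by omega⟩) ∧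
      (∀ (h2 : m - 2 < m - 1), v ⟨m - 2, h2⟩ = c ⟨m - 1, by omega⟩))

open Classical in
lemma adjMat_apply (c : Fin m → Fin b) (w v : Fin (m - 1) → Fin b) :
    adjMat b m c w v = if IsEdge c w v then 1 else 0 :=
  if_congr Iff.rfl rfl rfl

lemma isEdge_window_iff (hm : 2 ≤ m) (c x : Fin m → α) :
    IsEdge c (window x 0 (m - 1) (by omega)) (window x 1 (m - 1) (by omega)) ↔ x ≠ c := by
  have hlast : 1 + (m - 2) = m - 1 := by omega
  have hx : ((∀ (j : ℕ) (h : j < m - 1), x ⟨j, by omega⟩ = c ⟨j, by omega⟩) ∧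
      x ⟨m - 1, by omega⟩ = c ⟨m - 1, by omega⟩) ↔ x = c := by
    refine ⟨fun ⟨hinit, hfin⟩ => funext fun ⟨j, hj⟩ => ?_, by rintro rfl; simp⟩
    rcases Nat.lt_or_ge j (m - 1) with h | h
    · exact hinit j h
    · obtain rfl : j = m - 1 := by omega
      exact hfin
  simp only [IsEdge, window, zero_add, hlast, add_comm 1, implies_true, true_and,
    forall_prop_of_true (show m - 2 < m - 1 by omega), hx, ne_eq]

lemma ne_and_window_one_eq_iff (hm : 2 ≤ m) (c x : Fin m → α) (v : Fin (m - 1) → α) :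
    x ≠ c ∧ window x 1 (m - 1) (by omega) = v ↔
      IsEdge c (window x 0 (m - 1) (by omega)) v ∧ x ⟨m - 1, by omega⟩ = v ⟨m - 2, by omega⟩ := by
  constructor
  · rintro ⟨hxc, rfl⟩
    exact ⟨(isEdge_window_iff hm c x).2 hxc, congrArg x (Fin.ext (by simp; omega))⟩
  · rintro ⟨hedge, hfin⟩
    have hv : window x 1 (m - 1) (by omega) = v := by
      funext ⟨j, hj⟩
      rcases Nat.lt_or_ge (j + 1) (m - 1) with h | h
      · exact (congrArg x (Fin.ext (by simp; omega))).trans (hedge.1 j h)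
      · obtain rfl : j = m - 2 := by omega
        exact (congrArg x (Fin.ext (by simp; omega))).trans hfin
    subst hv
    exact ⟨(isEdge_window_iff hm c x).1 hedge, rfl⟩

open Classical in
noncomputable def wordCount (ω : ℕ → Fin m → Fin b) {k : ℕ} (hk : m - 1 ≤ k)
    (u v : Fin (m - 1) → Fin b) : ℕ :=
  #{d | d ∈ SigmaSet b m ω k ∧ window d 0 (m - 1) (by omega) = u ∧
    window d (k - (m - 1)) (m - 1) (by omega) = v}

lemma mem_sigmaSet_succ_and_windows_iff (hm : 2 ≤ m) (ω : ℕ → Fin m → Fin b) {k : ℕ}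
    (hk : m - 1 ≤ k) (d : Fin (k + 1) → Fin b) (u v : Fin (m - 1) → Fin b) :
    (d ∈ SigmaSet b m ω (k + 1) ∧ window d 0 (m - 1) (by omega) = u ∧
        window d (k + 1 - (m - 1)) (m - 1) (by omega) = v) ↔
      (Fin.init d ∈ SigmaSet b m ω k ∧ window (Fin.init d) 0 (m - 1) (by omega) = u ∧
        IsEdge (ω (k - (m - 1))) (window (Fin.init d) (k - (m - 1)) (m - 1) (by omega)) v) ∧
      d (Fin.last k) = v ⟨m - 2, by omega⟩ := by
  rw [mem_sigmaSet_succ ω (by omega) hk]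
  set x := window d (k - (m - 1)) m (by omega)
  have hhead : window (Fin.init d) (k - (m - 1)) (m - 1) (by omega) =
      window x 0 (m - 1) (by omega) := by
    rw [window_init, window_window _ _ _ (add_zero _)]
  have htail : window d (k + 1 - (m - 1)) (m - 1) (by omega) = window x 1 (m - 1) (by omega) := by
    rw [window_window (l := k + 1 - (m - 1)) _ _ _ (by omega)]
  have hlast : d (Fin.last k) = x ⟨m - 1, by omega⟩ := congrArg d (Fin.ext (by simp; omega))
  have hx := ne_and_window_one_eq_iff hm (ω (k - (m - 1))) x v
  rw [hhead, htail, hlast, window_init]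
  tauto

lemma card_filter_init_and_last [Fintype α] [DecidableEq α] {k : ℕ}
    (p : (Fin k → α) → Prop) [DecidablePred p] (a : α) :
    #{d : Fin (k + 1) → α | p (Fin.init d) ∧ d (Fin.last k) = a} = #{e | p e} := by
  refine card_nbij' Fin.init (Fin.snoc · a) (fun d hd => ?_) (fun e he => ?_)
    (fun d hd => ?_) (fun e _ => Fin.init_snoc _ _)
  · simp only [coe_filter, mem_univ, true_and, Set.mem_ofPred_eq] at hd ⊢
    exact hd.1
  · simpa using he
  · simp only [coe_filter, mem_univ, true_and, Set.mem_ofPred_eq] at hd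
    simp only [← hd.2, Fin.snoc_init_self]

lemma card_filter_and_comp {ι κ : Type*} [Fintype ι] [Fintype κ] [DecidableEq κ]
    (p : ι → Prop) [DecidablePred p] (q : κ → Prop) [DecidablePred q] (g : ι → κ) :
    #{i | p i ∧ q (g i)} = ∑ j, if q j then #{i | p i ∧ g i = j} else 0 := by
  rw [card_eq_sum_card_fiberwise (f := g) (t := univ) (fun _ _ => mem_univ _)]
  refine sum_congr rfl fun j _ => ?_
  rw [filter_filter]
  split_ifs with hj
  · congr 1
    exact filter_congr fun i _ => ⟨fun h => ⟨h.1.1, h.2⟩, fun h => ⟨⟨h.1, h.2 ▸ hj⟩, h.2⟩⟩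
  · exact card_eq_zero.2 (filter_false_of_mem fun i _ h => hj (h.2 ▸ h.1.2))

lemma wordCount_succ (hm : 2 ≤ m) (ω : ℕ → Fin m → Fin b) {k : ℕ} (hk : m - 1 ≤ k)
    (u v : Fin (m - 1) → Fin b) :
    (wordCount ω (k := k + 1) (by omega) u v : ℝ) =
      ∑ w, (wordCount ω hk u w : ℝ) * adjMat b m (ω (k - (m - 1))) w v := by
  classical
  have hcount : wordCount ω (k := k + 1) (by omega) u v =
      ∑ w, if IsEdge (ω (k - (m - 1))) w v then wordCount ω hk u w else 0 := by
    rw [wordCount, filter_congr fun d _ => mem_sigmaSet_succ_and_windows_iff hm ω hk d u v]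
    convert (card_filter_init_and_last _ (v ⟨m - 2, by omega⟩)).trans (card_filter_and_comp
      (fun e => e ∈ SigmaSet b m ω k ∧ window e 0 (m - 1) (by omega) = u)
      (IsEdge (ω (k - (m - 1))) · v) (window · (k - (m - 1)) (m - 1) (by omega))) using 1
    · simp only [and_assoc]
    · simp only [wordCount, and_assoc]
  rw [hcount]
  push_cast
  simp only [adjMat_apply, mul_ite, mul_one, mul_zero]

lemma wordCount_self (hm : 1 ≤ m) (ω : ℕ → Fin m → Fin b) (u v : Fin (m - 1) → Fin b) :
    wordCount ω le_rfl u v = if u = v then 1 else 0 := by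
  have hall (d : Fin (m - 1) → Fin b) : d ∈ SigmaSet b m ω (m - 1) := fun i hi => by omega
  simp only [wordCount, window_eq_self, hall, true_and]
  split_ifs with h
  · subst h
    exact card_eq_one.2 ⟨u, by ext; simp⟩
  · exact card_eq_zero.2 (filter_eq_empty_iff.2 fun d _ hd => h (hd.1.symm.trans hd.2))

lemma prodA_zero (ω : ℕ → Fin m → Fin b) : prodA b m ω 0 = 1 := rfl

lemma prodA_succ (ω : ℕ → Fin m → Fin b) (n : ℕ) :
    prodA b m ω (n + 1) = prodA b m ω n * adjMat b m (ω n) := by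
  simp [prodA, List.range_succ]

lemma prodA_apply (hm : 2 ≤ m) (ω : ℕ → Fin m → Fin b) {k : ℕ} (hk : m - 1 ≤ k)
    (u v : Fin (m - 1) → Fin b) : prodA b m ω (k - (m - 1)) u v = wordCount ω hk u v := by
  induction k, hk using Nat.le_induction generalizing u v with
  | base => simp [prodA_zero, Matrix.one_apply, wordCount_self (show 1 ≤ m by omega)]
  | succ k hk ih =>
    rw [show k + 1 - (m - 1) = k - (m - 1) + 1 by omega, prodA_succ, Matrix.mul_apply,
      wordCount_succ hm ω hk]
    simp only [ih]

lemma card_sigmaSet_eq_sum_wordCount (ω : ℕ → Fin m → Fin b) {k : ℕ} (hk : m - 1 ≤ k) :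
    Nat.card (SigmaSet b m ω k) = ∑ u, ∑ v, wordCount ω hk u v := by
  classical
  let ends (d : Fin k → Fin b) :=
    (window d 0 (m - 1) (by omega), window d (k - (m - 1)) (m - 1) (by omega))
  rw [Nat.card_eq_fintype_card, Fintype.card_subtype,
    card_eq_sum_card_fiberwise (f := ends) (t := univ) (fun _ _ => mem_univ _),
    Fintype.sum_prod_type]
  simp only [wordCount, filter_filter, ends, Prod.mk.injEq]

theorem card_sigma_eq_matNorm_general (b m : ℕ) (hm : 2 ≤ m)
    (ω : ℕ → Fin m → Fin b) (k : ℕ) (hk : m ≤ k) :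
    (Nat.card ↥(SigmaSet b m ω k) : ℝ) = matNorm (prodA b m ω (k - m + 1)) := by
  have hk' : m - 1 ≤ k := by omega
  rw [card_sigmaSet_eq_sum_wordCount ω hk', matNorm, show k - m + 1 = k - (m - 1) by omega]
  push_cast
  simp only [prodA_apply hm ω hk', Nat.abs_cast]

/-- **Lemma 2.3.** For every `ω` and `k ≥ m`,
`|Σ_k^ω| = ‖A_{ω^0} A_{ω^1} ⋯ A_{ω^{k-m}}‖`. -/
theorem card_sigma_eq_matNorm (b m : ℕ) (hb : 3 ≤ b) (hm : 2 ≤ m)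
    (ω : ℕ → Fin m → Fin b) (k : ℕ) (hk : m ≤ k) :
    (Nat.card ↥(SigmaSet b m ω k) : ℝ) = matNorm (prodA b m ω (k - m + 1)) :=
  card_sigma_eq_matNorm_general b m hm ω k hk

end Paper
end

section
/- For every ω ∈ (D_b^m)^{ℕ₀} and every k ∈ ℕ one has b·|Σ_{k+m−1}^ω| − |Σ_k^ω| ≤ |Σ_{k+m}^ω| ≤ (b−1)·∑_{j=0}^{m−1} |Σ_{k+j}^ω|. Moreover, if ω is totally distinct at position k then the lower bound holds with equality, and if ω is progressively overlapping at position k then the upper bound holds with equality. -/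
open MeasureTheory Filter

namespace Paper


section Aux

variable {b M : ℕ} (ω : ℕ → Fin (M + 2) → Fin b) (k : ℕ)

def pref {n : ℕ} (l : ℕ) (h : l ≤ n) (d : Fin n → Fin b) : Fin l → Fin b :=
  fun i => d ⟨i.1, lt_of_lt_of_le i.2 h⟩

variable {ω}

theorem mem_pref {n l : ℕ} (h : l ≤ n) {d : Fin n → Fin b}
    (hd : d ∈ SigmaSet b (M + 2) ω n) : pref l h d ∈ SigmaSet b (M + 2) ω l := by
  intro i hi
  exact hd i (hi.trans h)

theorem mem_ext_iff {d : Fin (k + M + 2) → Fin b} :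
    d ∈ SigmaSet b (M + 2) ω (k + M + 2) ↔
      pref (k + M + 1) (by omega) d ∈ SigmaSet b (M + 2) ω (k + M + 1) ∧
      (fun j : Fin (M + 2) => d ⟨k + j.1, by have := j.isLt; omega⟩) ≠ ω k := by
  constructor
  · intro hd
    exact ⟨mem_pref (by omega) hd, hd k (by omega)⟩
  · rintro ⟨h1, h2⟩ i hi
    rcases eq_or_lt_of_le (show i ≤ k by omega) with rfl | hik
    · exact h2
    · exact h1 i (by omega)

variable (ω)

def Tset : Set (Fin (k + M + 1) → Fin b) :=
  { u | u ∈ SigmaSet b (M + 2) ω (k + M + 1) ∧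
      ∀ t : Fin (M + 1), u ⟨k + t.1, by have := t.isLt; omega⟩ = ω k ⟨t.1, by have := t.isLt; omega⟩ }

variable {ω}

/-- helper for the impossible mixed case -/
theorem mixed_contra {d : Fin (k + M + 2) → Fin b} {u : Fin (k + M + 1) → Fin b}
    (hd : d ∈ SigmaSet b (M + 2) ω (k + M + 2)) (hu : u ∈ Tset ω k)
    (hp : pref (k + M + 1) (by omega) d = u)
    (hl : d ⟨k + M + 1, by omega⟩ = ω k ⟨M + 1, by omega⟩) : False := by
  have hwin := ((mem_ext_iff k).mp hd).2
  apply hwin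
  funext j
  rcases lt_or_ge j.1 (M + 1) with h' | h'
  · calc d ⟨k + j.1, by have := j.isLt; omega⟩
        = pref (k + M + 1) (by omega) d ⟨k + j.1, by omega⟩ := rfl
      _ = u ⟨k + j.1, by omega⟩ := by rw [hp]
      _ = ω k ⟨j.1, by omega⟩ := hu.2 ⟨j.1, h'⟩
      _ = ω k j := congrArg (ω k) (Fin.ext rfl)
  · have hj : j.1 = M + 1 := by have := j.isLt; omega
    calc d ⟨k + j.1, by have := j.isLt; omega⟩
        = d ⟨k + M + 1, by omega⟩ := congrArg d (Fin.ext (show k + j.1 = k + M + 1 by omega))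
      _ = ω k ⟨M + 1, by omega⟩ := hl
      _ = ω k j := congrArg (ω k) (Fin.ext (show M + 1 = j.1 by omega))

theorem step1 :
    Nat.card ↥(SigmaSet b (M + 2) ω (k + M + 2)) + Nat.card ↥(Tset ω k) =
      b * Nat.card ↥(SigmaSet b (M + 2) ω (k + M + 1)) := by
  classical
  set S2 := SigmaSet b (M + 2) ω (k + M + 2) with hS2
  set S1 := SigmaSet b (M + 2) ω (k + M + 1) with hS1
  let F : ↥S2 ⊕ ↥(Tset ω k) → ↥S1 × Fin b := fun x =>
    match x with
    | Sum.inl d => (⟨pref (k + M + 1) (by omega) d.1, mem_pref (by omega) d.2⟩,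
        d.1 ⟨k + M + 1, by omega⟩)
    | Sum.inr u => (⟨u.1, u.2.1⟩, ω k ⟨M + 1, by omega⟩)
  have hFbij : Function.Bijective F := by
    constructor
    · rintro (⟨d1, hd1⟩ | ⟨u1, hu1⟩) (⟨d2, hd2⟩ | ⟨u2, hu2⟩) h <;>
        simp only [F, Prod.mk.injEq, Subtype.mk.injEq] at h
      · refine congrArg Sum.inl (Subtype.ext (funext fun i => ?_))
        rcases lt_or_ge i.1 (k + M + 1) with h' | h'
        · exact congrFun h.1 ⟨i.1, h'⟩
        · have hival := i.isLt
          have : i = ⟨k + M + 1, by omega⟩ := Fin.ext (show i.1 = k + M + 1 by omega)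
          rw [this]; exact h.2
      · exact (mixed_contra k hd1 hu2 h.1 h.2).elim
      · exact (mixed_contra k hd2 hu1 h.1.symm h.2.symm).elim
      · exact congrArg Sum.inr (Subtype.ext h.1)
    · rintro ⟨⟨u, hu⟩, a⟩
      set d : Fin (k + M + 2) → Fin b := fun i =>
        if h : i.1 < k + M + 1 then u ⟨i.1, h⟩ else a with hd
      have hprefd : pref (k + M + 1) (by omega) d = u := by
        funext i
        simp only [pref, d, dif_pos i.2]
      have hlast : d ⟨k + M + 1, by omega⟩ = a := by simp [d]
      by_cases hwin : (fun j : Fin (M + 2) => d ⟨k + j.1, by have := j.isLt; omega⟩) = ω k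
      · have hmem : u ∈ Tset ω k := by
          refine ⟨hu, fun t => ?_⟩
          have := congrFun hwin ⟨t.1, by have := t.isLt; omega⟩
          simp only at this
          rw [← this]
          simp only [d, dif_pos (show k + t.1 < k + M + 1 by have := t.isLt; omega)]
        have h2 : a = ω k ⟨M + 1, by omega⟩ := by
          have h2 := congrFun hwin ⟨M + 1, by omega⟩
          simp only at h2
          calc a = d ⟨k + M + 1, by omega⟩ := hlast.symm
            _ = d ⟨k + (M + 1), by omega⟩ := congrArg d (Fin.ext (show k + M + 1 = k + (M + 1) by omega))
            _ = ω k ⟨M + 1, by omega⟩ := h2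
        refine ⟨Sum.inr ⟨u, hmem⟩, ?_⟩
        exact congrArg₂ Prod.mk (Subtype.ext rfl) h2.symm
      · refine ⟨Sum.inl ⟨d, (mem_ext_iff k).mpr ⟨hprefd ▸ hu, hwin⟩⟩, ?_⟩
        exact congrArg₂ Prod.mk (Subtype.ext hprefd) hlast
  have hcard := Nat.card_eq_of_bijective F hFbij
  rw [Nat.card_sum, Nat.card_prod] at hcard
  rw [hcard, Nat.card_eq_fintype_card (α := Fin b), Fintype.card_fin, mul_comm]

variable (ω)

def TtoS : ↥(Tset ω k) → ↥(SigmaSet b (M + 2) ω k) :=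
  fun u => ⟨pref k (by omega) u.1, mem_pref (by omega) u.2.1⟩

variable {ω}

theorem TtoS_inj : Function.Injective (TtoS ω k) := by
  rintro ⟨u1, hu1⟩ ⟨u2, hu2⟩ h
  simp only [TtoS, Subtype.mk.injEq] at h
  refine Subtype.ext (funext fun i => ?_)
  rcases lt_or_ge i.1 k with h' | h'
  · exact congrFun h ⟨i.1, h'⟩
  · have hlt := i.isLt
    have ht : i.1 - k < M + 1 := by omega
    have hi : i = ⟨k + (i.1 - k), by omega⟩ := Fin.ext (show i.1 = k + (i.1 - k) by omega)
    rw [hi]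
    show u1 ⟨k + (i.1 - k), by omega⟩ = u2 ⟨k + (i.1 - k), by omega⟩
    exact (hu1.2 ⟨i.1 - k, ht⟩).trans (hu2.2 ⟨i.1 - k, ht⟩).symm

theorem step2 : Nat.card ↥(Tset ω k) ≤ Nat.card ↥(SigmaSet b (M + 2) ω k) :=
  Nat.card_le_card_of_injective (TtoS ω k) (TtoS_inj k)

theorem TtoS_surj (hk : 1 ≤ k) (htd : TotDistinctAt b (M + 2) ω k) :
    Function.Surjective (TtoS ω k) := by
  rintro ⟨v, hv⟩
  set u : Fin (k + M + 1) → Fin b := fun i =>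
    if h : i.1 < k then v ⟨i.1, h⟩ else ω k ⟨i.1 - k, by have := i.isLt; omega⟩ with hu
  have hpref : pref k (by omega) u = v := by
    funext i
    simp only [pref, u, dif_pos i.2]
  have humem : u ∈ SigmaSet b (M + 2) ω (k + M + 1) := by
    intro i hi heq
    rcases le_or_gt (i + (M + 2)) k with hik | hik
    · -- inherited from v
      apply hv i hik
      funext j
      have := congrFun heq j
      rw [← this]
      simp only [u, dif_pos (show i + j.1 < k by have := j.isLt; omega)]
    · -- overlapping case: use total distinctness
      have hik2 : i < k := by omega
      set s := k - i with hs
      have hs1 : 1 ≤ s := by omega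
      have hs2 : s ≤ min k (M + 2 - 1) := by omega
      apply htd s hs1 hs2
      intro t ht
      have hki : k - s = i := by omega
      have h1 := congrFun heq ⟨t + s, by omega⟩
      simp only at h1
      have h2 : u ⟨i + (t + s), by omega⟩ = ω k ⟨t, by omega⟩ := by
        have hnot : ¬ (i + (t + s) < k) := by omega
        simp only [u, dif_neg hnot]
        exact congrArg (ω k) (Fin.ext (show i + (t + s) - k = t by omega))
      rw [hki]
      calc ω k ⟨t, by omega⟩ = u ⟨i + (t + s), by omega⟩ := h2.symm
        _ = ω i ⟨t + s, ht⟩ := h1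
  refine ⟨⟨u, humem, fun t => ?_⟩, ?_⟩
  · have hnot : ¬ (k + t.1 < k) := by omega
    simp only [u, dif_neg hnot]
    exact congrArg (ω k) (Fin.ext (show k + t.1 - k = t.1 by omega))
  · exact Subtype.ext hpref

theorem step2' (hk : 1 ≤ k) (htd : TotDistinctAt b (M + 2) ω k) :
    Nat.card ↥(Tset ω k) = Nat.card ↥(SigmaSet b (M + 2) ω k) :=
  Nat.card_eq_of_bijective (TtoS ω k) ⟨TtoS_inj k, TtoS_surj k hk htd⟩

variable (ω)

/-- admissible words of length `k+m` whose last mismatch with `ω^k` is at offset `j`. -/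
def Aset (j : Fin (M + 2)) : Set (Fin (k + M + 2) → Fin b) :=
  { d | d ∈ SigmaSet b (M + 2) ω (k + M + 2) ∧
      d ⟨k + j.1, by have := j.isLt; omega⟩ ≠ ω k j ∧
      ∀ (t : ℕ) (h1 : j.1 < t) (h2 : t < M + 2), d ⟨k + t, by omega⟩ = ω k ⟨t, h2⟩ }

def sigTo : (Σ j : Fin (M + 2), ↥(Aset ω k j)) → ↥(SigmaSet b (M + 2) ω (k + M + 2)) :=
  fun x => ⟨x.2.1, x.2.2.1⟩

variable {ω}

theorem sigTo_bij : Function.Bijective (sigTo ω k) := by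
  constructor
  · rintro ⟨j1, d1, hd1⟩ ⟨j2, d2, hd2⟩ h
    simp only [sigTo, Subtype.mk.injEq] at h
    have hj : j1 = j2 := by
      by_contra hne
      rcases lt_or_gt_of_ne (fun h' => hne (Fin.ext h')) with hlt | hlt
      · exact hd2.2.1 (h ▸ hd1.2.2 j2.1 hlt j2.isLt)
      · exact hd1.2.1 (h ▸ hd2.2.2 j1.1 hlt j1.isLt)
    subst hj
    subst h
    rfl
  · rintro ⟨d, hd⟩
    classical
    have hwin : ∃ j : Fin (M + 2), d ⟨k + j.1, by have := j.isLt; omega⟩ ≠ ω k j :=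
      Function.ne_iff.mp (hd k (by omega))
    obtain ⟨j0, hj0⟩ := hwin
    set Fs : Finset (Fin (M + 2)) :=
      Finset.univ.filter (fun j : Fin (M + 2) => d ⟨k + j.1, by have := j.isLt; omega⟩ ≠ ω k j)
      with hFs
    have hne : Fs.Nonempty := ⟨j0, by simp [Fs, hj0]⟩
    set jm := Fs.max' hne with hjm
    have hjm_mem : jm ∈ Fs := Fs.max'_mem hne
    have hjm_ne : d ⟨k + jm.1, by have := jm.isLt; omega⟩ ≠ ω k jm := by
      simpa [Fs] using hjm_mem
    have htail : ∀ (t : ℕ) (h1 : jm.1 < t) (h2 : t < M + 2),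
        d ⟨k + t, by omega⟩ = ω k ⟨t, h2⟩ := by
      intro t h1 h2
      by_contra hc
      have : (⟨t, h2⟩ : Fin (M + 2)) ∈ Fs := by simp [Fs]; exact hc
      have := Fs.le_max' _ this
      rw [← hjm] at this
      exact absurd (lt_of_lt_of_le h1 this) (lt_irrefl _)
    exact ⟨⟨jm, ⟨d, hd, hjm_ne, htail⟩⟩, rfl⟩

variable (ω)

def AtoP (j : Fin (M + 2)) : ↥(Aset ω k j) →
    ↥(SigmaSet b (M + 2) ω (k + j.1)) × {a : Fin b // a ≠ ω k j} :=
  fun d => (⟨pref (k + j.1) (by have := j.isLt; omega) d.1, mem_pref _ d.2.1⟩,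
    ⟨d.1 ⟨k + j.1, by have := j.isLt; omega⟩, d.2.2.1⟩)

variable {ω}

theorem AtoP_inj (j : Fin (M + 2)) : Function.Injective (AtoP ω k j) := by
  rintro ⟨d1, hd1⟩ ⟨d2, hd2⟩ h
  simp only [AtoP, Prod.mk.injEq, Subtype.mk.injEq] at h
  refine Subtype.ext (funext fun i => ?_)
  rcases lt_trichotomy i.1 (k + j.1) with h' | h' | h'
  · exact congrFun h.1 ⟨i.1, h'⟩
  · have : i = ⟨k + j.1, by have := j.isLt; omega⟩ := Fin.ext h'
    rw [this]; exact h.2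
  · have hlt := i.isLt
    have ht1 : j.1 < i.1 - k := by omega
    have ht2 : i.1 - k < M + 2 := by omega
    have hi : i = ⟨k + (i.1 - k), by omega⟩ := Fin.ext (show i.1 = k + (i.1 - k) by omega)
    rw [hi]
    show d1 ⟨k + (i.1 - k), by omega⟩ = d2 ⟨k + (i.1 - k), by omega⟩
    exact (hd1.2.2 (i.1 - k) ht1 ht2).trans (hd2.2.2 (i.1 - k) ht1 ht2).symm

theorem AtoP_surj (j : Fin (M + 2)) (hpo : ProgOverlapAt b (M + 2) ω k) :
    Function.Surjective (AtoP ω k j) := by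
  rintro ⟨⟨u, hu⟩, ⟨a, ha⟩⟩
  set d : Fin (k + M + 2) → Fin b := fun i =>
    if h : i.1 < k + j.1 then u ⟨i.1, h⟩
    else if i.1 = k + j.1 then a
    else ω k ⟨i.1 - k, by have := i.isLt; omega⟩ with hdd
  have hlet : d ⟨k + j.1, by have := j.isLt; omega⟩ = a := by
    simp [d]
  have hprefd : pref (k + j.1) (by have := j.isLt; omega) d = u := by
    funext i
    simp only [pref, d, dif_pos i.2]
  have htail : ∀ (t : ℕ) (h1 : j.1 < t) (h2 : t < M + 2), d ⟨k + t, by omega⟩ = ω k ⟨t, h2⟩ := by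
    intro t h1 h2
    have hn1 : ¬ (k + t < k + j.1) := by omega
    have hn2 : ¬ (k + t = k + j.1) := by omega
    simp only [d, dif_neg hn1, if_neg hn2]
    exact congrArg (ω k) (Fin.ext (show k + t - k = t by omega))
  have hdmem : d ∈ SigmaSet b (M + 2) ω (k + M + 2) := by
    intro i hi heq
    rcases le_or_gt (i + (M + 2)) (k + j.1) with hik | hik
    · -- inherited from u
      apply hu i hik
      funext t
      have := congrFun heq t
      rw [← this]
      simp only [d, dif_pos (show i + t.1 < k + j.1 by have := t.isLt; omega)]
    · -- the mismatch letter is in the window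
      have hile : i ≤ k := by omega
      have hp : k + j.1 - i < M + 2 := by omega
      have h1 := congrFun heq ⟨k + j.1 - i, hp⟩
      simp only at h1
      have h2 : d ⟨i + (k + j.1 - i), by omega⟩ = a := by
        rw [show (⟨i + (k + j.1 - i), by omega⟩ : Fin (k + M + 2))
            = ⟨k + j.1, by have := j.isLt; omega⟩ from
            Fin.ext (show i + (k + j.1 - i) = k + j.1 by omega)]
        exact hlet
      rw [h2] at h1
      -- h1 : a = ω i ⟨k + j.1 - i, hp⟩
      rcases eq_or_lt_of_le hile with rfl | hilt
      · apply ha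
        rw [h1]
        exact congrArg (ω i) (Fin.ext (show i + j.1 - i = j.1 by omega))
      · set s := k - i with hs
        have hs1 : 1 ≤ s := by omega
        have hs2 : s ≤ min k (M + 2 - 1) := by omega
        have hts : j.1 + s < M + 2 := by omega
        have hpo2 := hpo s hs1 hs2 j.1 hts
        have hki : k - s = i := by omega
        rw [hki] at hpo2
        apply ha
        rw [h1]
        calc ω i ⟨k + j.1 - i, hp⟩
            = ω i ⟨j.1 + s, hts⟩ :=
              congrArg (ω i) (Fin.ext (show k + j.1 - i = j.1 + s by omega))
          _ = ω k ⟨j.1, by omega⟩ := hpo2.symm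
          _ = ω k j := congrArg (ω k) (Fin.ext rfl)
  refine ⟨⟨d, hdmem, ?_, htail⟩, ?_⟩
  · rw [hlet]; exact ha
  · simp only [AtoP, Prod.mk.injEq, Subtype.mk.injEq]
    exact ⟨hprefd, hlet⟩


theorem nat_card_sigma' {ι : Type*} [Fintype ι] (f : ι → Type*) [∀ i, Finite (f i)] :
    Nat.card (Σ i, f i) = ∑ i, Nat.card (f i) := by
  classical
  letI : ∀ i, Fintype (f i) := fun i => Fintype.ofFinite _
  rw [Nat.card_eq_fintype_card, Fintype.card_sigma]
  simp [Nat.card_eq_fintype_card]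

theorem card_ne_subtype {b : ℕ} (c : Fin b) : Nat.card {a : Fin b // a ≠ c} = b - 1 := by
  classical
  rw [Nat.card_eq_fintype_card, Fintype.card_subtype_compl, Fintype.card_subtype_eq,
    Fintype.card_fin]

theorem step3sum :
    Nat.card ↥(SigmaSet b (M + 2) ω (k + M + 2)) = ∑ j : Fin (M + 2), Nat.card ↥(Aset ω k j) := by
  rw [← Nat.card_eq_of_bijective (sigTo ω k) (sigTo_bij k)]
  exact nat_card_sigma' _

theorem step4 (j : Fin (M + 2)) :
    Nat.card ↥(Aset ω k j) ≤ Nat.card ↥(SigmaSet b (M + 2) ω (k + j.1)) * (b - 1) := by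
  have h := Nat.card_le_card_of_injective (AtoP ω k j) (AtoP_inj k j)
  rwa [Nat.card_prod, card_ne_subtype] at h

theorem step4' (j : Fin (M + 2)) (hpo : ProgOverlapAt b (M + 2) ω k) :
    Nat.card ↥(Aset ω k j) = Nat.card ↥(SigmaSet b (M + 2) ω (k + j.1)) * (b - 1) := by
  have h := Nat.card_eq_of_bijective (AtoP ω k j) ⟨AtoP_inj k j, AtoP_surj k j hpo⟩
  rwa [Nat.card_prod, card_ne_subtype] at h

end Aux

/-- **Lemma 3.2.** For every `ω` and `k ≥ 1`,
`b|Σ_{k+m-1}^ω| - |Σ_k^ω| ≤ |Σ_{k+m}^ω| ≤ (b-1) ∑_{j=0}^{m-1} |Σ_{k+j}^ω|`,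
with equality on the left if `ω` is totally distinct at position `k`, and
equality on the right if `ω` is progressively overlapping at position `k`. -/
theorem card_sigma_recursion (b m : ℕ) (hb : 3 ≤ b) (hm : 2 ≤ m)
    (ω : ℕ → Fin m → Fin b) (k : ℕ) (hk : 1 ≤ k) :
    (b * Nat.card ↥(SigmaSet b m ω (k + m - 1)) ≤
        Nat.card ↥(SigmaSet b m ω (k + m)) + Nat.card ↥(SigmaSet b m ω k)) ∧
    (Nat.card ↥(SigmaSet b m ω (k + m)) ≤
        (b - 1) * ∑ j ∈ Finset.range m, Nat.card ↥(SigmaSet b m ω (k + j))) ∧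
    (TotDistinctAt b m ω k →
      b * Nat.card ↥(SigmaSet b m ω (k + m - 1)) =
        Nat.card ↥(SigmaSet b m ω (k + m)) + Nat.card ↥(SigmaSet b m ω k)) ∧
    (ProgOverlapAt b m ω k →
      Nat.card ↥(SigmaSet b m ω (k + m)) =
        (b - 1) * ∑ j ∈ Finset.range m, Nat.card ↥(SigmaSet b m ω (k + j))) := by
  obtain ⟨M, rfl⟩ : ∃ M, m = M + 2 := ⟨m - 2, by omega⟩
  have e1 : k + (M + 2) - 1 = k + M + 1 := by omega
  have e2 : k + (M + 2) = k + M + 2 := by omega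
  rw [e1, e2]
  have h1 := step1 (ω := ω) k
  have h2 := step2 (ω := ω) k
  have h3 := step3sum (ω := ω) k
  have hsum : ∀ (c : ℕ → ℕ),
      ∑ j : Fin (M + 2), c j.1 * (b - 1) = (b - 1) * ∑ j ∈ Finset.range (M + 2), c j := by
    intro c
    rw [Fin.sum_univ_eq_sum_range (fun t => c t * (b - 1)), ← Finset.sum_mul, mul_comm]
  refine ⟨by omega, ?_, fun htd => ?_, fun hpo => ?_⟩
  · calc Nat.card ↥(SigmaSet b (M + 2) ω (k + M + 2))
        = ∑ j : Fin (M + 2), Nat.card ↥(Aset ω k j) := h3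
      _ ≤ ∑ j : Fin (M + 2), Nat.card ↥(SigmaSet b (M + 2) ω (k + j.1)) * (b - 1) :=
          Finset.sum_le_sum (fun j _ => step4 k j)
      _ = (b - 1) * ∑ j ∈ Finset.range (M + 2),
            Nat.card ↥(SigmaSet b (M + 2) ω (k + j)) :=
          hsum (fun t => Nat.card ↥(SigmaSet b (M + 2) ω (k + t)))
  · have h2' := step2' k hk htd
    omega
  · calc Nat.card ↥(SigmaSet b (M + 2) ω (k + M + 2))
        = ∑ j : Fin (M + 2), Nat.card ↥(Aset ω k j) := h3
      _ = ∑ j : Fin (M + 2), Nat.card ↥(SigmaSet b (M + 2) ω (k + j.1)) * (b - 1) :=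
          Finset.sum_congr rfl (fun j _ => step4' k j hpo)
      _ = (b - 1) * ∑ j ∈ Finset.range (M + 2),
            Nat.card ↥(SigmaSet b (M + 2) ω (k + j)) :=
          hsum (fun t => Nat.card ↥(SigmaSet b (M + 2) ω (k + t)))

end Paper
end

section
/- Let f(x) = x^m − (b−1)(x^{m−1} + x^{m−2} + ⋯ + x + 1) and g(x) = x^m − b x^{m−1} + 1, and let λ and η be the largest real roots of f and g respectively. Then b−1 < η < λ < b, every complex root z of f with z ≠ λ satisfies |z| < 1, and every complex root z of g with z ≠ η satisfies |z| < 1 (so λ and η are Pisot numbers). -/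
open Finset

/-!
Multiplied by `x - 1`, the roots of `f` other than `1` are the solutions of `x ^ m (b - x) = b - 1`;
the roots of `g` are those of `x ^ (m - 1) (b - x) = 1`. Two distinct solutions `s, t` of
`x ^ k (B - x) = c` satisfy `c ∑ s ^ i t ^ (k - 1 - i) = s ^ k t ^ k`, which is impossible when
`|s|, |t| ≥ ρ` and `k |c| < ρ ^ (k + 1)`. A solution with `|z| ≥ 1` (and `z ≠ 1`) has
`|z| ≥ b - 1` since `|b - z| ≥ b - Re z`, and `λ, η > b - 1` by the intermediate value theorem;
so with `ρ = b - 1` such a `z` must be `λ`, resp. `η`.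
-/

namespace Paper

section Equations

variable {R : Type*} [CommRing R]

lemma sub_one_mul_sub_mul_geom_sum (x B : R) (m : ℕ) :
    (x - 1) * (x ^ m - (B - 1) * ∑ i ∈ range m, x ^ i) = x ^ m * (x - B) + (B - 1) := by
  linear_combination (1 - B) * geom_sum_mul x m

lemma pow_mul_sub_eq_of_eq_mul_geom_sum {x B : R} {m : ℕ}
    (h : x ^ m = (B - 1) * ∑ i ∈ range m, x ^ i) : x ^ m * (B - x) = B - 1 := by
  linear_combination sub_one_mul_sub_mul_geom_sum x B m - (x - 1) * h

lemma eq_mul_geom_sum_of_pow_mul_sub_eq [IsDomain R] {x B : R} {m : ℕ} (hx : x ≠ 1)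
    (h : x ^ m * (B - x) = B - 1) : x ^ m = (B - 1) * ∑ i ∈ range m, x ^ i := by
  have hprod : (x - 1) * (x ^ m - (B - 1) * ∑ i ∈ range m, x ^ i) = 0 := by
    linear_combination sub_one_mul_sub_mul_geom_sum x B m - h
  exact sub_eq_zero.mp ((mul_eq_zero.mp hprod).resolve_left (sub_ne_zero.mpr hx))

lemma pow_pred_mul_sub_eq_one_iff {x B : R} {m : ℕ} (hm : m ≠ 0) :
    x ^ (m - 1) * (B - x) = 1 ↔ x ^ m = B * x ^ (m - 1) - 1 := by
  rw [← pow_sub_one_mul hm x]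
  constructor <;> intro h <;> linear_combination -h

end Equations

lemma natCast_lt_pow_of_two_le {a : ℝ} (ha : 2 ≤ a) (n : ℕ) : (n : ℝ) < a ^ n :=
  calc (n : ℝ) < 2 ^ n := by exact_mod_cast Nat.lt_two_pow_self
    _ ≤ a ^ n := pow_le_pow_left₀ zero_le_two ha n

section Uniqueness

variable {𝕜 : Type*} [NormedField 𝕜]

lemma pow_mul_norm_geom_sum₂_le {s t : 𝕜} {ρ : ℝ} (hρ : 0 ≤ ρ) (hs : ρ ≤ ‖s‖) (ht : ρ ≤ ‖t‖)
    (k : ℕ) :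
    ρ ^ (k + 1) * ‖∑ i ∈ range k, s ^ i * t ^ (k - 1 - i)‖ ≤ k * (‖s‖ ^ k * ‖t‖ ^ k) := by
  have hterm : ∀ i ∈ range k, ρ ^ (k + 1) * (‖s‖ ^ i * ‖t‖ ^ (k - 1 - i)) ≤ ‖s‖ ^ k * ‖t‖ ^ k := by
    intro i hi
    obtain ⟨j, rfl⟩ := Nat.exists_eq_add_of_lt (mem_range.mp hi)
    rw [show i + j + 1 - 1 - i = j by omega]
    calc ρ ^ (i + j + 1 + 1) * (‖s‖ ^ i * ‖t‖ ^ j)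
        = ρ ^ (j + 1) * ρ ^ (i + 1) * (‖s‖ ^ i * ‖t‖ ^ j) := by ring
      _ ≤ ‖s‖ ^ (j + 1) * ‖t‖ ^ (i + 1) * (‖s‖ ^ i * ‖t‖ ^ j) := by gcongr
      _ = ‖s‖ ^ (i + j + 1) * ‖t‖ ^ (i + j + 1) := by ring
  calc ρ ^ (k + 1) * ‖∑ i ∈ range k, s ^ i * t ^ (k - 1 - i)‖
      ≤ ρ ^ (k + 1) * ∑ i ∈ range k, ‖s‖ ^ i * ‖t‖ ^ (k - 1 - i) := by
        gcongr
        exact (norm_sum_le _ _).trans_eq (by simp only [norm_mul, norm_pow])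
    _ = ∑ i ∈ range k, ρ ^ (k + 1) * (‖s‖ ^ i * ‖t‖ ^ (k - 1 - i)) := mul_sum _ _ _
    _ ≤ ∑ _i ∈ range k, ‖s‖ ^ k * ‖t‖ ^ k := sum_le_sum hterm
    _ = k * (‖s‖ ^ k * ‖t‖ ^ k) := by rw [sum_const, card_range, nsmul_eq_mul]

lemma eq_of_pow_mul_sub_eq_of_le_norm {k : ℕ} {B c s t : 𝕜} {ρ : ℝ} (hρ : 0 ≤ ρ)
    (hρc : k * ‖c‖ < ρ ^ (k + 1)) (hs : ρ ≤ ‖s‖) (ht : ρ ≤ ‖t‖)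
    (hsc : s ^ k * (B - s) = c) (htc : t ^ k * (B - t) = c) : s = t := by
  by_contra hst
  have hsum : c * ∑ i ∈ range k, s ^ i * t ^ (k - 1 - i) = s ^ k * t ^ k := by
    refine mul_left_cancel₀ (sub_ne_zero.mpr hst) ?_
    linear_combination c * geom_sum₂_mul s t k - s ^ k * htc + t ^ k * hsc
  have hnorm : ‖c‖ * ‖∑ i ∈ range k, s ^ i * t ^ (k - 1 - i)‖ = ‖s‖ ^ k * ‖t‖ ^ k := by
    rw [← norm_mul, hsum, norm_mul, norm_pow, norm_pow]
  have hρpos : 0 < ρ := lt_of_pow_lt_pow_left₀ (k + 1) hρ <|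
    (zero_pow k.succ_ne_zero).trans_le (by positivity) |>.trans_lt hρc
  have hP : 0 < ‖s‖ ^ k * ‖t‖ ^ k := by
    have := hρpos.trans_le hs; have := hρpos.trans_le ht; positivity
  have := calc ρ ^ (k + 1) * (‖s‖ ^ k * ‖t‖ ^ k)
      = ‖c‖ * (ρ ^ (k + 1) * ‖∑ i ∈ range k, s ^ i * t ^ (k - 1 - i)‖) := by rw [← hnorm]; ring
    _ ≤ ‖c‖ * (k * (‖s‖ ^ k * ‖t‖ ^ k)) :=
        mul_le_mul_of_nonneg_left (pow_mul_norm_geom_sum₂_le hρ hs ht k) (norm_nonneg c)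
    _ = k * ‖c‖ * (‖s‖ ^ k * ‖t‖ ^ k) := by ring
    _ < ρ ^ (k + 1) * (‖s‖ ^ k * ‖t‖ ^ k) := by gcongr
  exact lt_irrefl _ this

end Uniqueness

lemma norm_ofReal_sub_one {B : ℝ} (hB : 1 ≤ B) : ‖(B : ℂ) - 1‖ = B - 1 := by
  rw [← Complex.ofReal_one, ← Complex.ofReal_sub, Complex.norm_of_nonneg (sub_nonneg.mpr hB)]

lemma sub_one_lt_norm_of_pow_mul_sub_eq {B : ℝ} {m : ℕ} {z : ℂ} (hB : 1 ≤ B) (hm : 2 ≤ m)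
    (hz : z ^ m * (B - z) = B - 1) (hz1 : 1 ≤ ‖z‖) (hne : z ≠ 1) : B - 1 < ‖z‖ := by
  set r := ‖z‖
  have hnorm : r ^ m * ‖(B : ℂ) - z‖ = B - 1 := by
    simpa only [norm_mul, norm_pow, norm_ofReal_sub_one hB] using congrArg norm hz
  have hre : B - z.re ≤ ‖(B : ℂ) - z‖ := by
    simpa using Complex.re_le_norm ((B : ℂ) - z)
  rcases hz1.eq_or_lt with hr1 | hr1
  · rw [← hr1, one_pow, one_mul] at hnorm
    have hz_re : z.re = r := le_antisymm (Complex.re_le_norm z) (by linarith)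
    refine absurd ((Complex.eq_coe_norm_of_nonneg (Complex.re_eq_norm.mp hz_re)).trans ?_) hne
    rw [show ‖z‖ = 1 from hr1.symm, Complex.ofReal_one]
  · by_contra! hrB
    have hpow : r ^ 2 ≤ r ^ m := pow_le_pow_right₀ hr1.le hm
    have hle : r ^ m * (B - r) ≤ B - 1 := by
      rw [← hnorm]
      gcongr
      linarith [Complex.re_le_norm z]
    -- `r ^ 2 (B - r) - (B - 1) = (r - 1) (B (r + 1) - r ^ 2 - r - 1) > 0` for `1 < r ≤ B - 1`
    nlinarith [mul_pos (sub_pos.mpr hr1) (sub_pos.mpr hr1),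
      mul_le_mul_of_nonneg_right hpow (by linarith : (0 : ℝ) ≤ B - r),
      mul_nonneg (sub_pos.mpr hr1).le (sub_nonneg.mpr hrB)]

lemma sub_one_le_norm_of_pow_mul_sub_eq_one {B : ℝ} {k : ℕ} {z : ℂ}
    (hz : z ^ k * (B - z) = 1) (hz1 : 1 ≤ ‖z‖) : B - 1 ≤ ‖z‖ := by
  have hnorm : ‖z‖ ^ k * ‖(B : ℂ) - z‖ = 1 := by
    simpa only [norm_mul, norm_pow, norm_one] using congrArg norm hz
  have hle : ‖(B : ℂ) - z‖ ≤ 1 := by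
    nlinarith [one_le_pow₀ (n := k) hz1, norm_nonneg ((B : ℂ) - z)]
  have hre : B - z.re ≤ ‖(B : ℂ) - z‖ := by
    simpa using Complex.re_le_norm ((B : ℂ) - z)
  linarith [Complex.re_le_norm z]

lemma lt_of_sub_one_lt_pow_mul_sub {B lam u : ℝ} {m : ℕ} (hu : 1 < u) (huB : u ≤ B)
    (hfu : B - 1 < u ^ m * (B - u))
    (hmax : ∀ x : ℝ, x ^ m = (B - 1) * ∑ i ∈ range m, x ^ i → x ≤ lam) : u < lam := by
  obtain ⟨x, hx, hx0⟩ := intermediate_value_Ioo huB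
    (f := fun x => B - 1 - x ^ m * (B - x)) (by fun_prop)
    (show (0 : ℝ) ∈ Set.Ioo _ _ from ⟨by linarith, by simp only [sub_self, mul_zero, sub_zero]; linarith⟩)
  exact hx.1.trans_le <| hmax x <|
    eq_mul_geom_sum_of_pow_mul_sub_eq (by linarith [hx.1]) (by linarith [hx0])

lemma lt_of_one_lt_pow_pred_mul_sub {B eta u : ℝ} {m : ℕ} (hm : m ≠ 0) (huB : u ≤ B)
    (hgu : 1 < u ^ (m - 1) * (B - u))
    (hmax : ∀ x : ℝ, x ^ m = B * x ^ (m - 1) - 1 → x ≤ eta) : u < eta := by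
  obtain ⟨x, hx, hx0⟩ := intermediate_value_Ioo huB
    (f := fun x => 1 - x ^ (m - 1) * (B - x)) (by fun_prop)
    (show (0 : ℝ) ∈ Set.Ioo _ _ from ⟨by linarith, by simp⟩)
  exact hx.1.trans_le <| hmax x <| (pow_pred_mul_sub_eq_one_iff hm).mp (by linarith [hx0])

lemma norm_lt_one_of_eq_mul_geom_sum {B lam : ℝ} {m : ℕ} (hB : 3 ≤ B) (hm : 2 ≤ m)
    (hlam : lam ^ m * (B - lam) = B - 1) (hlam_gt : B - 1 < lam) {z : ℂ}
    (hz : z ^ m = (B - 1) * ∑ i ∈ range m, z ^ i) (hzlam : z ≠ lam) : ‖z‖ < 1 := by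
  by_contra! hz1
  have hz' := pow_mul_sub_eq_of_eq_mul_geom_sum hz
  have hne : z ≠ 1 := by
    rintro rfl
    have h1 : (1 : ℝ) = (B - 1) * m := by exact_mod_cast (by simpa using hz : (1 : ℂ) = (B - 1) * m)
    have h2 : (2 : ℝ) ≤ m := by exact_mod_cast hm
    nlinarith
  refine hzlam (eq_of_pow_mul_sub_eq_of_le_norm (ρ := B - 1) (by linarith) ?_
    (sub_one_lt_norm_of_pow_mul_sub_eq (by linarith) hm hz' hz1 hne).le ?_ hz'
    (by exact_mod_cast hlam))
  · rw [norm_ofReal_sub_one (by linarith), pow_succ]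
    exact mul_lt_mul_of_pos_right (natCast_lt_pow_of_two_le (by linarith) m) (by linarith)
  · rw [Complex.norm_of_nonneg (by linarith)]
    exact hlam_gt.le

lemma norm_lt_one_of_eq_mul_pow_pred_sub_one {B eta : ℝ} {m : ℕ} (hB : 3 ≤ B) (hm : m ≠ 0)
    (heta : eta ^ (m - 1) * (B - eta) = 1) (heta_gt : B - 1 < eta) {z : ℂ}
    (hz : z ^ m = B * z ^ (m - 1) - 1) (hzeta : z ≠ eta) : ‖z‖ < 1 := by
  by_contra! hz1
  have hz' := (pow_pred_mul_sub_eq_one_iff hm).mpr hz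
  refine hzeta (eq_of_pow_mul_sub_eq_of_le_norm (ρ := B - 1) (by linarith) ?_
    (sub_one_le_norm_of_pow_mul_sub_eq_one hz' hz1) ?_ hz' (by exact_mod_cast heta))
  · rw [norm_one, mul_one, Nat.sub_add_cancel (Nat.one_le_iff_ne_zero.mpr hm)]
    exact (Nat.cast_le.mpr (Nat.sub_le m 1)).trans_lt (natCast_lt_pow_of_two_le (by linarith) m)
  · rw [Complex.norm_of_nonneg (by linarith)]
    exact heta_gt.le

/-- **Lemma 3.3.** Let `λ` and `η` be the largest real roots of
`f(x) = x^m - (b-1)(x^{m-1} + ⋯ + x + 1)` and `g(x) = x^m - b x^{m-1} + 1`,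
respectively. Then `b - 1 < η < λ < b`, and both `λ` and `η` are Pisot numbers:
all their other complex conjugate roots lie strictly inside the unit circle. -/
theorem pisot_roots (b m : ℕ) (hb : 3 ≤ b) (hm : 2 ≤ m) (lam eta : ℝ)
    (hlam : lam ^ m = ((b : ℝ) - 1) * ∑ i ∈ Finset.range m, lam ^ i)
    (hlammax : ∀ x : ℝ, x ^ m = ((b : ℝ) - 1) * ∑ i ∈ Finset.range m, x ^ i → x ≤ lam)
    (heta : eta ^ m = (b : ℝ) * eta ^ (m - 1) - 1)
    (hetamax : ∀ x : ℝ, x ^ m = (b : ℝ) * x ^ (m - 1) - 1 → x ≤ eta) :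
    ((b : ℝ) - 1 < eta ∧ eta < lam ∧ lam < (b : ℝ)) ∧
    (∀ z : ℂ, z ^ m = ((b : ℂ) - 1) * ∑ i ∈ Finset.range m, z ^ i →
      z ≠ (lam : ℂ) → ‖z‖ < 1) ∧
    (∀ z : ℂ, z ^ m = (b : ℂ) * z ^ (m - 1) - 1 →
      z ≠ (eta : ℂ) → ‖z‖ < 1) := by
  have hB : (3 : ℝ) ≤ b := by exact_mod_cast hb
  have hm0 : m ≠ 0 := by omega
  have hlam' := pow_mul_sub_eq_of_eq_mul_geom_sum hlam
  have heta' := (pow_pred_mul_sub_eq_one_iff hm0).mpr heta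
  have heta_gt : (b : ℝ) - 1 < eta := lt_of_one_lt_pow_pred_mul_sub hm0 (by linarith)
    (by simpa using one_lt_pow₀ (by linarith : (1 : ℝ) < b - 1) (by omega : m - 1 ≠ 0)) hetamax
  have hlam_gt : (b : ℝ) - 1 < lam := lt_of_sub_one_lt_pow_mul_sub (by linarith) (by linarith)
    (by simpa using lt_self_pow₀ (by linarith : (1 : ℝ) < b - 1) (by omega : 1 < m)) hlammax
  have heta_lt_b : eta < b :=
    sub_pos.mp (pos_of_mul_pos_right (heta' ▸ one_pos) (pow_nonneg (by linarith) _))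
  have hlam_lt_b : lam < b :=
    sub_pos.mp (pos_of_mul_pos_right (hlam' ▸ sub_pos.mpr (by linarith))
      (pow_nonneg (by linarith) _))
  -- `η ^ m (b - η) = η > b - 1`
  have heta_lt_lam : eta < lam := lt_of_sub_one_lt_pow_mul_sub (by linarith) heta_lt_b.le
    (by rw [← pow_sub_one_mul hm0, mul_comm _ eta, mul_assoc, heta']; linarith) hlammax
  refine ⟨⟨heta_gt, heta_lt_lam, hlam_lt_b⟩, fun z hz hzlam => ?_, fun z hz hzeta => ?_⟩
  · exact norm_lt_one_of_eq_mul_geom_sum hB hm hlam' hlam_gt (by exact_mod_cast hz) hzlam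
  · exact norm_lt_one_of_eq_mul_pow_pred_sub_one hB hm0 heta' heta_gt (by exact_mod_cast hz) hzeta

end Paper
end

section
/- There exists a constant C₂ > 1 (depending only on b and m) such that for every progressively overlapping sequence ζ ∈ (D_b^m)^{ℕ₀}, every totally distinct sequence ξ ∈ (D_b^m)^{ℕ₀}, and every k ∈ ℕ: C₂⁻¹ λ^k ≤ |Σ_k^ζ| ≤ C₂ λ^k and C₂⁻¹ η^k ≤ |Σ_k^ξ| ≤ C₂ η^k, where λ is the unique root in (b−1, b) of x^m − (b−1)(x^{m−1} + ⋯ + x + 1) = 0 and η is the unique root in (b−1, b) of x^m − b x^{m−1} + 1 = 0. -/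
open MeasureTheory Filter

namespace Paper


/-!
Write `N k = |Σ_k^ω|`. Appending a letter to the words of `Σ_k^ω` gives `b · N k` words, and those
outside `Σ_{k+1}^ω` are the ones ending in `ω^{k+1-m}`; dropping their last letter embeds them in
`Σ_k^ω`, so `N (k+1) ≥ (b-1) N k ≥ 2 N k`. For a totally distinct `ξ` they correspond exactly to
`Σ_{k+1-m}^ξ`, since no earlier forbidden word can overlap `ξ^{k+1-m}`; hence
`N (k+1) = b N k - N (k+1-m)`. For a progressively overlapping `ζ` all the words `ζ^i` are windows
of one sequence `s`. With `Q k r` the number of words of `Σ_k^ζ` whose last `r` letters agree with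
`s`, one gets `N (k+1) = b N k - Q k (m-1)` and `Q (k+1) (r+1) = Q k r - Q k (m-1)`.

In both cases the root `ρ` gives a combination `V k = N k - (b-ρ) ∑_{j<m-1} ρ^j Q k (j+1)`
(with `Q k r = N (k-r)` in the totally distinct case) such that `V (k+1) = ρ V k`, while the
doubling of `N` gives `N k / 2 ≤ V k ≤ N k`. So `N k` stays within a constant factor of `ρ^k`.
-/

section Recurrence

open Finset

variable {N : ℕ → ℝ} {Q : ℕ → ℕ → ℝ} {B ρ α : ℝ} {M : ℕ}

theorem geom_sum_le_pow_of_two_le {x : ℝ} (hx : 2 ≤ x) (n : ℕ) :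
    ∑ j ∈ range n, x ^ j ≤ x ^ n := by
  have hsum : 0 ≤ ∑ j ∈ range n, x ^ j := sum_nonneg fun j _ => pow_nonneg (by linarith) j
  nlinarith [geom_sum_mul x n]

/-- The pairing of `(N k, Q k 1, …, Q k M)` with `(1, -(B-ρ), -(B-ρ)ρ, …, -(B-ρ)ρ^(M-1))`, which
is a left `ρ`-eigenvector of the recurrence of `eigenPairing_succ` exactly when
`(B - ρ) (α ∑_{j<M} ρ^j + ρ^M) = 1`. -/
def eigenPairing (B ρ : ℝ) (M : ℕ) (N : ℕ → ℝ) (Q : ℕ → ℕ → ℝ) (k : ℕ) : ℝ :=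
  N k - (B - ρ) * ∑ j ∈ range M, ρ ^ j * Q k (j + 1)

theorem eigenPairing_succ (hchar : (B - ρ) * (α * ∑ j ∈ range M, ρ ^ j + ρ ^ M) = 1) {k : ℕ}
    (hN_succ : N (k + 1) = B * N k - Q k M) (hQ_zero : Q k 0 = N k)
    (hQ_succ : ∀ r < M, Q (k + 1) (r + 1) = Q k r - α * Q k M) :
    eigenPairing B ρ M N Q (k + 1) = ρ * eigenPairing B ρ M N Q k := by
  have hshift : ∑ j ∈ range M, ρ ^ j * Q (k + 1) (j + 1) =
      ∑ j ∈ range M, ρ ^ j * Q k j - α * (∑ j ∈ range M, ρ ^ j) * Q k M := by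
    rw [mul_assoc, sum_mul, mul_sum, ← sum_sub_distrib]
    refine sum_congr rfl fun j hj => ?_
    rw [hQ_succ j (mem_range.1 hj)]
    ring
  have hsplit : ∑ j ∈ range M, ρ ^ j * Q k j + ρ ^ M * Q k M =
      N k + ρ * ∑ j ∈ range M, ρ ^ j * Q k (j + 1) := by
    rw [← sum_range_succ (fun j => ρ ^ j * Q k j), sum_range_succ', mul_sum, pow_zero, one_mul,
      hQ_zero, add_comm]
    exact congrArg (N k + ·) (sum_congr rfl fun j _ => by ring)
  rw [eigenPairing, eigenPairing, hN_succ, hshift]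
  linear_combination (-(B - ρ)) * hsplit + Q k M * hchar

theorem eigenPairing_mem_Icc (hρ : 2 ≤ ρ) (hρB : ρ ≤ B) (hα : 0 ≤ α)
    (hchar : (B - ρ) * (α * ∑ j ∈ range M, ρ ^ j + ρ ^ M) = 1) {k : ℕ}
    (hN_nonneg : 0 ≤ N k) (hQ : ∀ r < M, 0 ≤ Q k (r + 1) ∧ 2 * Q k (r + 1) ≤ N k) :
    eigenPairing B ρ M N Q k ∈ Set.Icc (N k / 2) (N k) := by
  rw [eigenPairing, Set.mem_Icc]
  have hρ0 : 0 ≤ ρ := by linarith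
  have hBρ : 0 ≤ B - ρ := by linarith
  have hgeom_nonneg : 0 ≤ ∑ j ∈ range M, ρ ^ j := sum_nonneg fun j _ => pow_nonneg hρ0 j
  have hweights : (B - ρ) * ∑ j ∈ range M, ρ ^ j ≤ 1 := by
    rw [← hchar]
    gcongr
    linarith [mul_nonneg hα hgeom_nonneg, geom_sum_le_pow_of_two_le hρ M]
  have hcorr_nonneg : 0 ≤ ∑ j ∈ range M, ρ ^ j * Q k (j + 1) :=
    sum_nonneg fun j hj => mul_nonneg (pow_nonneg hρ0 j) (hQ j (mem_range.1 hj)).1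
  have hcorr_le : ∑ j ∈ range M, ρ ^ j * Q k (j + 1) ≤ (∑ j ∈ range M, ρ ^ j) * (N k / 2) := by
    rw [sum_mul]
    exact sum_le_sum fun j hj =>
      mul_le_mul_of_nonneg_left (by linarith [hQ j (mem_range.1 hj)]) (pow_nonneg hρ0 j)
  constructor
  · nlinarith [mul_le_mul_of_nonneg_left hcorr_le hBρ,
      mul_le_mul_of_nonneg_right hweights (by linarith : 0 ≤ N k / 2)]
  · nlinarith [mul_nonneg hBρ hcorr_nonneg]

theorem bounds_of_eventually_geometric {V : ℕ → ℝ} (hρ : 1 ≤ ρ) (hρB : ρ ≤ B)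
    (hN_small : ∀ k ≤ M, N k = B ^ k) (hV : ∀ k, M ≤ k → V (k + 1) = ρ * V k)
    (hVN : ∀ k, M ≤ k → V k ∈ Set.Icc (N k / 2) (N k)) (k : ℕ) :
    (2 * B ^ M)⁻¹ * ρ ^ k ≤ N k ∧ N k ≤ 2 * B ^ M * ρ ^ k := by
  have hB : 1 ≤ B := hρ.trans hρB
  have hBM : 0 < B ^ M := by positivity
  rcases le_or_gt k M with hk | hk
  · have hρk : ρ ^ k ≤ B ^ M :=
      (pow_le_pow_left₀ (by linarith) hρB k).trans (pow_le_pow_right₀ hB hk)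
    rw [hN_small k hk]
    constructor
    · rw [inv_mul_le_iff₀ (by positivity)]
      nlinarith [one_le_pow₀ (n := k) hB]
    · nlinarith [pow_le_pow_right₀ hB hk, one_le_pow₀ (n := k) hρ]
  · obtain ⟨n, rfl⟩ : ∃ n, k = M + n := ⟨k - M, by omega⟩
    have hgeom : ∀ n, V (M + n) = ρ ^ n * V M := by
      intro n
      induction n with
      | zero => simp
      | succ n ih => rw [← add_assoc, hV _ (by omega), ih, pow_succ]; ring
    obtain ⟨hVM_ge, hVM_le⟩ := hVN M le_rfl
    obtain ⟨hVk_ge, hVk_le⟩ := hVN (M + n) (by omega)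
    rw [hN_small M le_rfl] at hVM_ge hVM_le
    rw [hgeom n] at hVk_ge hVk_le
    have hρn : 0 < ρ ^ n := by positivity
    have hρM : ρ ^ M ≤ B ^ M := pow_le_pow_left₀ (by linarith) hρB M
    rw [pow_add]
    constructor
    · rw [inv_mul_le_iff₀ (by positivity)]
      nlinarith [mul_le_mul_of_nonneg_left hVM_ge hρn.le, one_le_pow₀ (n := M) hρ]
    · nlinarith [mul_le_mul_of_nonneg_left hVM_le hρn.le, one_le_pow₀ (n := M) hρ]

theorem bounds_of_recurrence (hρ : 2 ≤ ρ) (hρB : ρ ≤ B) (hα : 0 ≤ α)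
    (hchar : (B - ρ) * (α * ∑ j ∈ range M, ρ ^ j + ρ ^ M) = 1)
    (hN_small : ∀ k ≤ M, N k = B ^ k) (hN_nonneg : ∀ k, 0 ≤ N k)
    (hQ : ∀ k, M ≤ k → ∀ r < M, 0 ≤ Q k (r + 1) ∧ 2 * Q k (r + 1) ≤ N k)
    (hQ_zero : ∀ k, Q k 0 = N k) (hN_succ : ∀ k, M ≤ k → N (k + 1) = B * N k - Q k M)
    (hQ_succ : ∀ k, M ≤ k → ∀ r < M, Q (k + 1) (r + 1) = Q k r - α * Q k M) (k : ℕ) :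
    (2 * B ^ M)⁻¹ * ρ ^ k ≤ N k ∧ N k ≤ 2 * B ^ M * ρ ^ k :=
  bounds_of_eventually_geometric (by linarith) hρB hN_small
    (fun k hk => eigenPairing_succ hchar (hN_succ k hk) (hQ_zero k) (hQ_succ k hk))
    (fun k hk => eigenPairing_mem_Icc hρ hρB hα hchar (hN_nonneg k) (hQ k hk)) k

end Recurrence

theorem sub_mul_geom_sum_eq_one {B x : ℝ} {n : ℕ}
    (hx : x ^ n = (B - 1) * ∑ i ∈ Finset.range n, x ^ i) :
    (B - x) * ∑ i ∈ Finset.range n, x ^ i = 1 := by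
  linear_combination -hx - geom_sum_mul x n

theorem card_init_mem_and_last_eq {α : Type*} {k : ℕ} (S : Set (Fin k → α)) (c : α) :
    Nat.card {e : Fin (k + 1) → α | Fin.init e ∈ S ∧ e (Fin.last k) = c} = Nat.card S :=
  Nat.card_congr
    { toFun := fun e => ⟨Fin.init e.1, e.2.1⟩
      invFun := fun d => ⟨Fin.snoc d.1 c, by simp [d.2]⟩
      left_inv := fun e => Subtype.ext (by simp only [← e.2.2, Fin.snoc_init_self])
      right_inv := fun d => Subtype.ext (by simp) }

theorem card_init_mem {α : Type*} {k : ℕ} (S : Set (Fin k → α)) :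
    Nat.card {e : Fin (k + 1) → α | Fin.init e ∈ S} = Nat.card S * Nat.card α := by
  rw [← Nat.card_prod]
  exact Nat.card_congr
    { toFun := fun e => (⟨Fin.init e.1, e.2⟩, e.1 (Fin.last k))
      invFun := fun p => ⟨Fin.snoc p.1.1 p.2, by simp [p.1.2]⟩
      left_inv := fun e => Subtype.ext (Fin.snoc_init_self e.1)
      right_inv := fun p => by ext <;> simp }

section Words

variable {b m : ℕ}

def EndsWithWord {α : Type*} {n : ℕ} (w : Fin m → α) (e : Fin n → α) : Prop :=
  ∀ (t : Fin n) (h : n ≤ t + m), e t = w ⟨t + m - n, by omega⟩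

def AgreesAtEnd {α : Type*} {n : ℕ} (s : ℕ → α) (r : ℕ) (e : Fin n → α) : Prop :=
  ∀ t : Fin n, n ≤ t + r → e t = s t

theorem agreesAtEnd_succ_iff {α : Type*} {s : ℕ → α} {r k : ℕ} {e : Fin (k + 1) → α} :
    AgreesAtEnd s (r + 1) e ↔ AgreesAtEnd s r (Fin.init e) ∧ e (Fin.last k) = s k := by
  constructor
  · intro h
    exact ⟨fun t ht => h t.castSucc (by simp; omega), h (Fin.last k) (by simp)⟩
  · rintro ⟨h, hlast⟩ t ht
    rcases Fin.eq_castSucc_or_eq_last t with ⟨t, rfl⟩ | rfl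
    · exact h t (by simp at ht; omega)
    · exact hlast

noncomputable def sigmaCard (b m : ℕ) (ω : ℕ → Fin m → Fin b) (k : ℕ) : ℕ :=
  Nat.card (SigmaSet b m ω k)

theorem SigmaSet_eq_univ_of_lt {ω : ℕ → Fin m → Fin b} {k : ℕ} (hk : k < m) :
    SigmaSet b m ω k = Set.univ :=
  Set.eq_univ_of_forall fun _ i hi => absurd hi (by omega)

theorem sigmaCard_of_lt {ω : ℕ → Fin m → Fin b} {k : ℕ} (hk : k < m) :
    sigmaCard b m ω k = b ^ k := by
  simp [sigmaCard, SigmaSet_eq_univ_of_lt hk]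

theorem mem_SigmaSet_succ_iff {ω : ℕ → Fin m → Fin b} {k : ℕ} (hmk : m ≤ k + 1)
    {e : Fin (k + 1) → Fin b} :
    e ∈ SigmaSet b m ω (k + 1) ↔
      Fin.init e ∈ SigmaSet b m ω k ∧ ¬ EndsWithWord (ω (k + 1 - m)) e := by
  constructor
  · intro he
    refine ⟨fun i hi => he i (by omega), fun hend => he (k + 1 - m) (by omega) (funext fun j => ?_)⟩
    rw [hend _ (by simp; omega)]
    exact congrArg _ (Fin.ext (by simp; omega))
  · rintro ⟨hinit, hend⟩ i hi hwin
    obtain hlt | rfl : i < k + 1 - m ∨ i = k + 1 - m := by omega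
    · exact hinit i (by omega) hwin
    · refine hend fun t ht => ?_
      rw [← hwin]
      exact congrArg e (Fin.ext (by simp; omega))

def BlockedSet (ω : ℕ → Fin m → Fin b) (k : ℕ) : Set (Fin (k + 1) → Fin b) :=
  {e | Fin.init e ∈ SigmaSet b m ω k ∧ EndsWithWord (ω (k + 1 - m)) e}

theorem sigmaCard_succ_add_card_BlockedSet {ω : ℕ → Fin m → Fin b} {k : ℕ} (hmk : m ≤ k + 1) :
    sigmaCard b m ω (k + 1) + Nat.card (BlockedSet ω k) = sigmaCard b m ω k * b := by
  have hunion : {e : Fin (k + 1) → Fin b | Fin.init e ∈ SigmaSet b m ω k} =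
      SigmaSet b m ω (k + 1) ∪ BlockedSet ω k := by
    ext e
    rw [Set.mem_union, mem_SigmaSet_succ_iff hmk]
    by_cases h : EndsWithWord (ω (k + 1 - m)) e <;> simp [BlockedSet, h]
  have hdisj : Disjoint (SigmaSet b m ω (k + 1)) (BlockedSet ω k) :=
    Set.disjoint_left.2 fun e he hbl => ((mem_SigmaSet_succ_iff hmk).1 he).2 hbl.2
  have hcard := card_init_mem (α := Fin b) (SigmaSet b m ω k)
  rw [hunion, Nat.card_coe_set_eq, Set.ncard_union_eq hdisj] at hcard
  simpa [sigmaCard, Nat.card_coe_set_eq] using hcard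

theorem card_BlockedSet_le (hm : 0 < m) (ω : ℕ → Fin m → Fin b) (k : ℕ) :
    Nat.card (BlockedSet ω k) ≤ sigmaCard b m ω k := by
  rw [sigmaCard, ← card_init_mem_and_last_eq (SigmaSet b m ω k)
    (ω (k + 1 - m) (⟨m - 1, by omega⟩ : Fin m))]
  apply Nat.card_mono (Set.toFinite _)
  intro e he
  refine ⟨he.1, ?_⟩
  rw [he.2 (Fin.last k) (by simp; omega)]
  exact congrArg _ (Fin.ext (by simp; omega))

theorem sigmaCard_succ_ge (hm : 0 < m) (ω : ℕ → Fin m → Fin b) (k : ℕ) :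
    (b - 1) * sigmaCard b m ω k ≤ sigmaCard b m ω (k + 1) := by
  rcases lt_or_ge (k + 1) m with hkm | hmk
  · rw [sigmaCard_of_lt hkm, sigmaCard_of_lt (by omega), pow_succ, mul_comm]
    exact Nat.mul_le_mul_left _ (Nat.sub_le b 1)
  · have hsplit := sigmaCard_succ_add_card_BlockedSet (ω := ω) hmk
    have hblocked := card_BlockedSet_le hm ω k
    rw [Nat.sub_one_mul, mul_comm]
    omega

theorem two_mul_sigmaCard_le (hb : 3 ≤ b) (hm : 0 < m) (ω : ℕ → Fin m → Fin b) {i k : ℕ}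
    (hik : i < k) : 2 * sigmaCard b m ω i ≤ sigmaCard b m ω k := by
  have hmono : Monotone (sigmaCard b m ω) := monotone_nat_of_le_succ fun n =>
    (Nat.le_mul_of_pos_left _ (by omega)).trans (sigmaCard_succ_ge hm ω n)
  calc 2 * sigmaCard b m ω i ≤ (b - 1) * sigmaCard b m ω i := Nat.mul_le_mul_right _ (by omega)
    _ ≤ sigmaCard b m ω (i + 1) := sigmaCard_succ_ge hm ω i
    _ ≤ sigmaCard b m ω k := hmono hik

section TotallyDistinct

def appendWord {α : Type*} {k : ℕ} (d : Fin (k + 1 - m) → α) (w : Fin m → α) :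
    Fin (k + 1) → α :=
  fun t => if h : (t : ℕ) < k + 1 - m then d ⟨t, h⟩ else w ⟨t - (k + 1 - m), by omega⟩

variable {ξ : ℕ → Fin m → Fin b} (hξ : ∀ k : ℕ, 1 ≤ k → TotDistinctAt b m ξ k)
include hξ

theorem appendWord_mem_BlockedSet {k : ℕ} (hmk : m ≤ k + 1) {d : Fin (k + 1 - m) → Fin b}
    (hd : d ∈ SigmaSet b m ξ (k + 1 - m)) : appendWord d (ξ (k + 1 - m)) ∈ BlockedSet ξ k := by
  refine ⟨fun i hi hwin => ?_, fun t ht => ?_⟩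
  · by_cases hiK : i + m ≤ k + 1 - m
    · refine hd i hiK (funext fun j => ?_)
      rw [← congrFun hwin j]
      simp [appendWord, Fin.init, show i + (j : ℕ) < k + 1 - m by omega]
    -- a window straddling the junction would make `ξ^(k+1-m)` overlap `ξ^i`
    · refine hξ (k + 1 - m) (by omega) (k + 1 - m - i) (by omega) (by omega) fun t ht => ?_
      have hij := congrFun hwin ⟨t + (k + 1 - m - i), ht⟩
      simp only [Fin.init, appendWord, Fin.val_castSucc,
        show ¬ i + (t + (k + 1 - m - i)) < k + 1 - m by omega, dite_false] at hij
      rw [show k + 1 - m - (k + 1 - m - i) = i by omega, ← hij]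
      exact congrArg _ (Fin.ext (by simp; omega))
  · simp only [appendWord, show ¬ (t : ℕ) < k + 1 - m by omega, dite_false]
    exact congrArg _ (Fin.ext (by simp; omega))

theorem card_BlockedSet_of_totDistinct (hm : 0 < m) {k : ℕ} (hmk : m ≤ k + 1) :
    Nat.card (BlockedSet ξ k) = sigmaCard b m ξ (k + 1 - m) :=
  Nat.card_congr
    { toFun := fun e => ⟨Fin.take (k + 1 - m) (by omega) e.1, fun i hi => e.2.1 i (by omega)⟩
      invFun := fun d => ⟨appendWord d.1 (ξ (k + 1 - m)), appendWord_mem_BlockedSet hξ hmk d.2⟩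
      left_inv := fun e => Subtype.ext <| funext fun t => by
        by_cases ht : (t : ℕ) < k + 1 - m
        · simp [appendWord, ht, Fin.take_apply]
        · simp only [appendWord, ht, dite_false]
          rw [e.2.2 t (by omega)]
          exact congrArg _ (Fin.ext (by simp; omega))
      right_inv := fun d => Subtype.ext <| funext fun t => by simp [appendWord, Fin.take_apply] }

theorem sigmaCard_bounds_of_totDistinct (hb : 3 ≤ b) (hm : 0 < m) {η : ℝ} (hη : 2 ≤ η)
    (hηb : η ≤ b) (hchar : η ^ m = b * η ^ (m - 1) - 1) (k : ℕ) :
    (2 * (b : ℝ) ^ (m - 1))⁻¹ * η ^ k ≤ sigmaCard b m ξ k ∧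
      (sigmaCard b m ξ k : ℝ) ≤ 2 * (b : ℝ) ^ (m - 1) * η ^ k := by
  refine bounds_of_recurrence (Q := fun k r => (sigmaCard b m ξ (k - r) : ℝ)) (α := 0) hη hηb
    le_rfl ?_ (fun k hk => ?_) (fun _ => Nat.cast_nonneg _) (fun k hk r hr => ?_) (fun k => ?_)
    (fun k hk => ?_) (fun k hk r hr => ?_) k
  · have hpow : η ^ m = η ^ (m - 1) * η := by rw [← pow_succ, Nat.sub_add_cancel hm]
    linear_combination -hchar + hpow
  · rw [sigmaCard_of_lt (by omega)]
    push_cast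
    rfl
  · exact ⟨Nat.cast_nonneg _, by exact_mod_cast two_mul_sigmaCard_le hb hm ξ (by omega)⟩
  · simp
  · have hsplit := sigmaCard_succ_add_card_BlockedSet (ω := ξ) (k := k) (by omega)
    rw [card_BlockedSet_of_totDistinct hξ hm (by omega), show k + 1 - m = k - (m - 1) by omega]
      at hsplit
    rw [eq_sub_iff_add_eq, mul_comm]
    exact_mod_cast hsplit
  · simp [show k + 1 - (r + 1) = k - r by omega]

end TotallyDistinct

section ProgressivelyOverlapping

theorem exists_seq_of_progOverlap (hm : 0 < m) {ζ : ℕ → Fin m → Fin b}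
    (hζ : ∀ k : ℕ, 1 ≤ k → ProgOverlapAt b m ζ k) :
    ∃ s : ℕ → Fin b, ∀ i t (ht : t < m), ζ i ⟨t, ht⟩ = s (i + t) := by
  refine ⟨fun n => if h : n < m then ζ 0 ⟨n, h⟩ else ζ (n + 1 - m) ⟨m - 1, by omega⟩,
    fun i => ?_⟩
  induction i with
  | zero => intro t ht; simp [ht]
  | succ i ih =>
    intro t ht
    obtain ht' | rfl : t < m - 1 ∨ t = m - 1 := by omega
    · have hshift := hζ (i + 1) (by omega) 1 le_rfl (by omega) t (by omega)
      rw [Nat.add_sub_cancel] at hshift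
      rw [hshift, ih (t + 1) (by omega), add_right_comm, add_assoc]
    · simp only [show ¬ i + 1 + (m - 1) < m by omega, dite_false]
      congr 1
      omega

variable {ζ : ℕ → Fin m → Fin b} {s : ℕ → Fin b}

def SigmaSetWithTail (ζ : ℕ → Fin m → Fin b) (s : ℕ → Fin b) (k r : ℕ) :
    Set (Fin k → Fin b) :=
  {d | d ∈ SigmaSet b m ζ k ∧ AgreesAtEnd s r d}

theorem SigmaSetWithTail_zero (ζ : ℕ → Fin m → Fin b) (s : ℕ → Fin b) (k : ℕ) :
    SigmaSetWithTail ζ s k 0 = SigmaSet b m ζ k :=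
  Set.sep_eq_self_iff_mem_true.2 fun _ _ t ht => absurd ht (by omega)

theorem SigmaSetWithTail_anti (ζ : ℕ → Fin m → Fin b) (s : ℕ → Fin b) (k : ℕ) :
    Antitone (SigmaSetWithTail ζ s k) :=
  fun _ _ hr _ hd => ⟨hd.1, fun t ht => hd.2 t (by omega)⟩

theorem card_SigmaSetWithTail_le (ζ : ℕ → Fin m → Fin b) (s : ℕ → Fin b) (k r : ℕ) :
    Nat.card (SigmaSetWithTail ζ s k r) ≤ sigmaCard b m ζ (k - r) := by
  rw [sigmaCard, Nat.card_coe_set_eq, Nat.card_coe_set_eq]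
  refine Set.ncard_le_ncard_of_injOn (Fin.take (k - r) (Nat.sub_le k r))
    (fun d hd i hi => hd.1 i (by omega)) (fun d hd d' hd' heq => funext fun t => ?_)
    (Set.toFinite _)
  by_cases ht : (t : ℕ) < k - r
  · exact congrFun heq ⟨t, ht⟩
  · rw [hd.2 t (by omega), hd'.2 t (by omega)]

variable (hm : 0 < m) (hs : ∀ i t (ht : t < m), ζ i ⟨t, ht⟩ = s (i + t))
include hm hs

theorem endsWithWord_iff_agreesAtEnd {k : ℕ} (hmk : m ≤ k + 1) {e : Fin (k + 1) → Fin b} :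
    EndsWithWord (ζ (k + 1 - m)) e ↔
      AgreesAtEnd s (m - 1) (Fin.init e) ∧ e (Fin.last k) = s k := by
  rw [← agreesAtEnd_succ_iff, Nat.sub_add_cancel hm]
  refine forall_congr' fun t => ⟨fun h ht => ?_, fun h ht => ?_⟩ <;>
    rw [h ht, hs, show k + 1 - m + (t + m - (k + 1)) = t by omega]

theorem card_BlockedSet_of_seq {k : ℕ} (hmk : m ≤ k + 1) :
    Nat.card (BlockedSet ζ k) = Nat.card (SigmaSetWithTail ζ s k (m - 1)) := by
  rw [← card_init_mem_and_last_eq (SigmaSetWithTail ζ s k (m - 1)) (s k)]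
  congr! 3 with e
  simp only [BlockedSet, SigmaSetWithTail, Set.mem_ofPred_eq,
    endsWithWord_iff_agreesAtEnd hm hs hmk, and_assoc]

theorem card_SigmaSetWithTail_succ {k r : ℕ} (hmk : m ≤ k + 1) (hr : r ≤ m - 1) :
    Nat.card (SigmaSetWithTail ζ s (k + 1) (r + 1)) + Nat.card (SigmaSetWithTail ζ s k (m - 1)) =
      Nat.card (SigmaSetWithTail ζ s k r) := by
  have hset : SigmaSetWithTail ζ s (k + 1) (r + 1) = {e : Fin (k + 1) → Fin b | Fin.init e ∈
      SigmaSetWithTail ζ s k r \ SigmaSetWithTail ζ s k (m - 1) ∧ e (Fin.last k) = s k} := by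
    ext e
    simp only [SigmaSetWithTail, Set.mem_ofPred_eq, Set.mem_sdiff, mem_SigmaSet_succ_iff hmk,
      endsWithWord_iff_agreesAtEnd hm hs hmk, agreesAtEnd_succ_iff]
    tauto
  rw [hset, card_init_mem_and_last_eq, Nat.card_coe_set_eq, Nat.card_coe_set_eq,
    Nat.card_coe_set_eq, Set.ncard_sdiff_add_ncard_of_subset (SigmaSetWithTail_anti ζ s k hr)]

end ProgressivelyOverlapping

theorem sigmaCard_bounds_of_progOverlap (hb : 3 ≤ b) (hm : 0 < m) {lam : ℝ} (hlam : 2 ≤ lam)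
    (hlamb : lam ≤ b) (hchar : lam ^ m = ((b : ℝ) - 1) * ∑ i ∈ Finset.range m, lam ^ i)
    {ζ : ℕ → Fin m → Fin b} (hζ : ∀ k : ℕ, 1 ≤ k → ProgOverlapAt b m ζ k) (k : ℕ) :
    (2 * (b : ℝ) ^ (m - 1))⁻¹ * lam ^ k ≤ sigmaCard b m ζ k ∧
      (sigmaCard b m ζ k : ℝ) ≤ 2 * (b : ℝ) ^ (m - 1) * lam ^ k := by
  obtain ⟨s, hs⟩ := exists_seq_of_progOverlap hm hζ
  refine bounds_of_recurrence (Q := fun k r => (Nat.card (SigmaSetWithTail ζ s k r) : ℝ))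
    (α := 1) hlam hlamb zero_le_one ?_ (fun k hk => ?_) (fun _ => Nat.cast_nonneg _)
    (fun k hk r hr => ?_) (fun k => ?_) (fun k hk => ?_) (fun k hk r hr => ?_) k
  · rw [one_mul, ← Finset.sum_range_succ, Nat.sub_add_cancel hm]
    exact sub_mul_geom_sum_eq_one hchar
  · rw [sigmaCard_of_lt (by omega)]
    push_cast
    rfl
  · refine ⟨Nat.cast_nonneg _, ?_⟩
    exact_mod_cast (Nat.mul_le_mul_left 2 (card_SigmaSetWithTail_le ζ s k (r + 1))).trans
      (two_mul_sigmaCard_le hb hm ζ (by omega))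
  · simp [SigmaSetWithTail_zero, sigmaCard]
  · have hsplit := sigmaCard_succ_add_card_BlockedSet (ω := ζ) (k := k) (by omega)
    rw [card_BlockedSet_of_seq hm hs (by omega)] at hsplit
    rw [eq_sub_iff_add_eq, mul_comm]
    exact_mod_cast hsplit
  · rw [one_mul, eq_sub_iff_add_eq]
    exact_mod_cast card_SigmaSetWithTail_succ hm hs (by omega) hr.le

end Words

/-- **Proposition 3.5.** There is a constant `C₂ > 1`, depending only on `b` and `m`,
such that `C₂⁻¹ λ^k ≤ |Σ_k^ζ| ≤ C₂ λ^k` for every progressively overlapping `ζ` and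
`C₂⁻¹ η^k ≤ |Σ_k^ξ| ≤ C₂ η^k` for every totally distinct `ξ`. -/
theorem card_sigma_PO_TD_bounds (b m : ℕ) (hb : 3 ≤ b) (hm : 2 ≤ m)
    (lam : ℝ) (hlam1 : (b : ℝ) - 1 < lam) (hlam2 : lam < (b : ℝ))
    (hlam : lam ^ m = ((b : ℝ) - 1) * ∑ i ∈ Finset.range m, lam ^ i)
    (eta : ℝ) (heta1 : (b : ℝ) - 1 < eta) (heta2 : eta < (b : ℝ))
    (heta : eta ^ m = (b : ℝ) * eta ^ (m - 1) - 1) :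
    ∃ C : ℝ, 1 < C ∧
      ∀ ζ : ℕ → Fin m → Fin b, (∀ k : ℕ, 1 ≤ k → ProgOverlapAt b m ζ k) →
      ∀ ξ : ℕ → Fin m → Fin b, (∀ k : ℕ, 1 ≤ k → TotDistinctAt b m ξ k) →
      ∀ k : ℕ, 1 ≤ k →
        (C⁻¹ * lam ^ k ≤ (Nat.card ↥(SigmaSet b m ζ k) : ℝ) ∧
          (Nat.card ↥(SigmaSet b m ζ k) : ℝ) ≤ C * lam ^ k) ∧
        (C⁻¹ * eta ^ k ≤ (Nat.card ↥(SigmaSet b m ξ k) : ℝ) ∧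
          (Nat.card ↥(SigmaSet b m ξ k) : ℝ) ≤ C * eta ^ k) := by
  have hbR : (3 : ℝ) ≤ b := by exact_mod_cast hb
  have hm0 : 0 < m := by omega
  refine ⟨2 * (b : ℝ) ^ (m - 1), ?_, fun ζ hζ ξ hξ k _ => ⟨?_, ?_⟩⟩
  · nlinarith [one_le_pow₀ (n := m - 1) (by linarith : (1 : ℝ) ≤ b)]
  · exact sigmaCard_bounds_of_progOverlap hb hm0 (by linarith) hlam2.le hlam hζ k
  · exact sigmaCard_bounds_of_totDistinct hξ hb hm0 (by linarith) heta2.le heta k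

end Paper
end
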